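/- arXiv:2211.05202 — 6 statements merged into one kernel-verified Lean document; each statement's English description precedes it below -/
import Mathlib

section
/- Let (A,·) be a left-symmetric algebra and r = Σ_i u_i⊗v_i ∈ A⊗A a symmetric solution of the S-equation, so that (A,·,Δ_r) is a quasitriangular left-symmetric bialgebra. Let (M,▷,◁) be an A-bimodule. Define φ: M→A⊗M by φ(m) := Σ_i u_i⊗(m◁v_i) − u_i⊗(v_i▷m) and ψ: M→M⊗A by ψ(m) := Σ_i (m◁u_i)⊗v_i. Then (M,▷,◁,φ,ψ) is a left-symmetric Hopf bimodule over (A,·,Δ_r); in particular (M,φ,ψ) is an A-bicomodule and conditions (HM1)–(HM4) hold. -/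
open TensorProduct LinearMap

noncomputable section

variable {k : Type*} [Field k] [CharZero k]

section Toolkit

variable {M N P : Type*} [AddCommGroup M] [Module k M] [AddCommGroup N] [Module k N]
  [AddCommGroup P] [Module k P]

/-- The flip `τ` of a twofold tensor product. -/
def tflip : M ⊗[k] N →ₗ[k] N ⊗[k] M := (TensorProduct.comm k M N).toLinearMap

/-- Reassociator `X ⊗ (Y ⊗ Z) → (X ⊗ Y) ⊗ Z`. -/
def tassoc : M ⊗[k] (N ⊗[k] P) →ₗ[k] (M ⊗[k] N) ⊗[k] P :=
  (TensorProduct.assoc k M N P).symm.toLinearMap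

/-- `τ₁₂`, swapping the first two factors of a (left-normed) threefold tensor product. -/
def tswap : (M ⊗[k] N) ⊗[k] P →ₗ[k] (N ⊗[k] M) ⊗[k] P :=
  LinearMap.rTensor P (tflip : M ⊗[k] N →ₗ[k] N ⊗[k] M)

/-- A left-symmetric algebra structure: `(ab)c - a(bc) = (ba)c - b(ac)`. -/
def isLSA (m : M →ₗ[k] M →ₗ[k] M) : Prop :=
  ∀ a b c, m (m a b) c - m a (m b c) = m (m b a) c - m b (m a c)

/-- A left-symmetric coalgebra structure:
`(Δ⊗id)Δ - (id⊗Δ)Δ = τ₁₂((Δ⊗id)Δ - (id⊗Δ)Δ)`. -/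
def isLSC (D : M →ₗ[k] M ⊗[k] M) : Prop :=
  ∀ a, D.rTensor M (D a) - tassoc (D.lTensor M (D a))
     = tswap (D.rTensor M (D a) - tassoc (D.lTensor M (D a)))

/-- A left-symmetric bialgebra: a left-symmetric algebra and coalgebra with the
two compatibility conditions of Bai. -/
def isLSB (m : M →ₗ[k] M →ₗ[k] M) (D : M →ₗ[k] M ⊗[k] M) : Prop :=
  isLSA m ∧ isLSC D ∧
  (∀ a b, D (m a b - m b a)
      = (m a).rTensor M (D b) + (m a - m.flip a).lTensor M (D b)
        - (m b).rTensor M (D a) - (m b - m.flip b).lTensor M (D a)) ∧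
  (∀ a b, D (m a b) - tflip (D (m a b))
      = ((m.flip b).lTensor M (D a) + (m a).rTensor M (D b) + (m a).lTensor M (D b))
        - tflip ((m.flip b).lTensor M (D a) + (m a).rTensor M (D b) + (m a).lTensor M (D b)))

end Toolkit

section HopfToolkit

variable {B A : Type*} [AddCommGroup B] [Module k B] [AddCommGroup A] [Module k A]

/-- `A` is a bimodule over the left-symmetric algebra `(B, m)`, with left action `l`
and right action `r`. -/
def isBimod (m : B →ₗ[k] B →ₗ[k] B) (l : B →ₗ[k] A →ₗ[k] A) (r : A →ₗ[k] B →ₗ[k] A) :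
    Prop :=
  (∀ x y v, l (m x y) v - l x (l y v) = l (m y x) v - l y (l x v)) ∧
  (∀ v x y, r (r v x) y - r v (m x y) = r (l x v) y - l x (r v y))

/-- `A` is a bicomodule over the left-symmetric coalgebra `(B, D)`, with left coaction
`φ` and right coaction `ψ`. -/
def isBicomod (D : B →ₗ[k] B ⊗[k] B) (φ : A →ₗ[k] B ⊗[k] A) (ψ : A →ₗ[k] A ⊗[k] B) :
    Prop :=
  (∀ v, D.rTensor A (φ v) - tassoc (φ.lTensor B (φ v))
      = tswap (D.rTensor A (φ v) - tassoc (φ.lTensor B (φ v)))) ∧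
  (∀ v, ψ.rTensor B (ψ v) - tassoc (D.lTensor A (ψ v))
      = tswap (φ.rTensor B (ψ v) - tassoc (ψ.lTensor B (φ v))))

/-- `A` is a left-symmetric Hopf bimodule over `(B, m, D)`: a bimodule and bicomodule
satisfying (HM1)–(HM4). -/
def isHopfBimod (m : B →ₗ[k] B →ₗ[k] B) (D : B →ₗ[k] B ⊗[k] B)
    (l : B →ₗ[k] A →ₗ[k] A) (r : A →ₗ[k] B →ₗ[k] A)
    (φ : A →ₗ[k] B ⊗[k] A) (ψ : A →ₗ[k] A ⊗[k] B) : Prop :=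
  isBimod m l r ∧ isBicomod D φ ψ ∧
  -- (HM1)
  (∀ (x : B) (v : A), φ (r v x) - φ (l x v)
      = (r.flip x).lTensor B (φ v) + (r v).lTensor B (D x) - (l.flip v).lTensor B (D x)
        - (m x).rTensor A (φ v) - (l x).lTensor B (φ v)) ∧
  -- (HM2)
  (∀ (x : B) (v : A), ψ (l x v) - ψ (r v x)
      = (l x).rTensor B (ψ v) + (m x - m.flip x).lTensor A (ψ v)
        - (r v).rTensor B (D x)) ∧
  -- (HM3)
  (∀ (x : B) (v : A), φ (l x v) - tflip (ψ (l x v))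
      = (l.flip v).lTensor B (D x) + (m x).rTensor A (φ v) + (l x).lTensor B (φ v)
        - tflip ((l x).rTensor B (ψ v)) - tflip ((m x).lTensor A (ψ v))) ∧
  -- (HM4)
  (∀ (x : B) (v : A), φ (r v x) - tflip (ψ (r v x))
      = (r.flip x).lTensor B (φ v) + (r v).lTensor B (D x)
        - tflip ((m.flip x).lTensor A (ψ v)) - tflip ((r v).rTensor B (D x)))

/-- `A` is a braided left-symmetric bialgebra over the left-symmetric bialgebra
`(B, mB, DB)`: a left-symmetric algebra and coalgebra in the category of
left-symmetric Hopf bimodules over `B`, satisfying (BB1) and (BB2). -/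
def isBraidedLSB (mB : B →ₗ[k] B →ₗ[k] B) (DB : B →ₗ[k] B ⊗[k] B)
    (mA : A →ₗ[k] A →ₗ[k] A) (DA : A →ₗ[k] A ⊗[k] A)
    (l : B →ₗ[k] A →ₗ[k] A) (r : A →ₗ[k] B →ₗ[k] A)
    (φ : A →ₗ[k] B ⊗[k] A) (ψ : A →ₗ[k] A ⊗[k] B) : Prop :=
  isLSA mA ∧ isLSC DA ∧ isHopfBimod mB DB l r φ ψ ∧
  -- bimodule left-symmetric algebra
  (∀ x a b, l x (mA a b) - mA (l x a) b = mA a (l x b) - mA (r a x) b) ∧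
  (∀ a b x, r (mA a b) x - mA a (r b x) = r (mA b a) x - mA b (r a x)) ∧
  -- compatibilities of the coproduct with the actions
  (∀ x a, DA (l x a) - DA (r a x)
      = (l x).rTensor A (DA a) - (r.flip x).lTensor A (DA a) + (l x).lTensor A (DA a)) ∧
  (∀ x a, DA (l x a) - tflip (DA (l x a))
      = ((l x).rTensor A (DA a) + (l x).lTensor A (DA a))
        - tflip ((l x).rTensor A (DA a) + (l x).lTensor A (DA a))) ∧
  (∀ a x, DA (r a x) - tflip (DA (r a x))
      = (r.flip x).lTensor A (DA a) - tflip ((r.flip x).lTensor A (DA a))) ∧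
  -- compatibilities of the coactions with the product
  (∀ a b, φ (mA a b - mA b a)
      = (mA.flip b - mA b).lTensor B (φ a) + (mA a - mA.flip a).lTensor B (φ b)) ∧
  (∀ a b, ψ (mA a b - mA b a)
      = (mA a).rTensor B (ψ b) - (mA b).rTensor B (ψ a)) ∧
  (∀ a b, φ (mA a b) - tflip (ψ (mA a b))
      = (mA a).lTensor B (φ b) + (mA.flip b).lTensor B (φ a)
        - tflip ((mA a).rTensor B (ψ b))) ∧
  -- `A` is a bicomodule left-symmetric coalgebra
  (∀ a, tassoc (DA.lTensor B (φ a)) - φ.rTensor A (DA a)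
      = tswap (tassoc (φ.lTensor A (DA a)) - ψ.rTensor A (DA a))) ∧
  (∀ a, DA.rTensor B (ψ a) - tassoc (ψ.lTensor A (DA a))
      = tswap (DA.rTensor B (ψ a) - tassoc (ψ.lTensor A (DA a)))) ∧
  -- (BB1)
  (∀ a b, DA (mA a b - mA b a)
      = (mA a).rTensor A (DA b) + (mA a - mA.flip a).lTensor A (DA b)
        - (mA b).rTensor A (DA a) - (mA b - mA.flip b).lTensor A (DA a)
        + (l.flip b).lTensor A (ψ a) + (r a).rTensor A (φ b) + (r a).lTensor A (ψ b)
        - (l.flip a).lTensor A (ψ b) - (r b).rTensor A (φ a) - (r b).lTensor A (ψ a)) ∧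
  -- (BB2)
  (∀ a b, DA (mA a b) - tflip (DA (mA a b))
      = ((mA.flip b).lTensor A (DA a) + (mA a).rTensor A (DA b) + (mA a).lTensor A (DA b)
          + (l.flip b).lTensor A (ψ a) + (r a).rTensor A (φ b) + (r a).lTensor A (ψ b))
        - tflip ((mA.flip b).lTensor A (DA a) + (mA a).rTensor A (DA b)
          + (mA a).lTensor A (DA b) + (l.flip b).lTensor A (ψ a) + (r a).rTensor A (φ b)
          + (r a).lTensor A (ψ b)))

end HopfToolkit

set_option linter.unusedSectionVars false

section MyAux

variable {X : Type*} [AddCommGroup X] [Module k X]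
variable {A : Type*} [AddCommGroup A] [Module k A]
variable {N P : Type*} [AddCommGroup N] [Module k N] [AddCommGroup P] [Module k P]

@[simp] lemma tflip_tmul (x : N) (y : P) : (tflip (x ⊗ₜ[k] y) : P ⊗[k] N) = y ⊗ₜ[k] x := rfl

@[simp] lemma tassoc_tmul (x : N) (y : P) (z : X) :
    (tassoc (x ⊗ₜ[k] (y ⊗ₜ[k] z)) : (N ⊗[k] P) ⊗[k] X) = (x ⊗ₜ[k] y) ⊗ₜ[k] z := rfl

@[simp] lemma tswap_tmul (x : N) (y : P) (z : X) :
    (tswap ((x ⊗ₜ[k] y) ⊗ₜ[k] z) : (P ⊗[k] N) ⊗[k] X) = (y ⊗ₜ[k] x) ⊗ₜ[k] z := rfl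

lemma solve₁ {a b c d : X} (h : a - b = c - d) : a = c - d + b := by rw [← h]; abel

lemma solve₂ {a b c d : X} (h : a - b = c - d) : d = c - a + b := by
  apply eq_of_sub_eq_zero
  calc d - (c - a + b) = a - b - (c - d) := by abel
    _ = 0 := by rw [h]; abel

lemma sum_swap_of_symm {S : Finset (A × A)}
    (h : ∑ p ∈ S, p.2 ⊗ₜ[k] p.1 = ∑ p ∈ S, p.1 ⊗ₜ[k] p.2) (g : A ⊗[k] A →ₗ[k] X) :
    ∑ p ∈ S, g (p.2 ⊗ₜ[k] p.1) = ∑ p ∈ S, g (p.1 ⊗ₜ[k] p.2) := by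
  rw [← map_sum, ← map_sum, h]

lemma seq_apply {S : Finset (A × A)} {mulA : A →ₗ[k] A →ₗ[k] A}
    (hseqS : ∑ p ∈ S, ∑ q ∈ S,
      ((p.1 ⊗ₜ[k] mulA p.2 q.1) ⊗ₜ[k] q.2 - (mulA p.1 q.1 ⊗ₜ[k] p.2) ⊗ₜ[k] q.2
        + (p.1 ⊗ₜ[k] q.1) ⊗ₜ[k] (mulA p.2 q.2 - mulA q.2 p.2)) = 0)
    (g : (A ⊗[k] A) ⊗[k] A →ₗ[k] X) :
    ∑ p ∈ S, ∑ q ∈ S,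
      (g ((p.1 ⊗ₜ[k] mulA p.2 q.1) ⊗ₜ[k] q.2) - g ((mulA p.1 q.1 ⊗ₜ[k] p.2) ⊗ₜ[k] q.2)
        + g ((p.1 ⊗ₜ[k] q.1) ⊗ₜ[k] (mulA p.2 q.2 - mulA q.2 p.2))) = 0 := by
  have h := congrArg g hseqS
  simpa only [map_sum, map_sub, map_add, map_zero] using h

end MyAux

set_option maxHeartbeats 8000000 in
lemma bicom1_aux {A M : Type*} [AddCommGroup A] [Module k A] [AddCommGroup M] [Module k M]
    (mulA : A →ₗ[k] A →ₗ[k] A)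
    (l : A →ₗ[k] M →ₗ[k] M) (r : M →ₗ[k] A →ₗ[k] M)
    (hl : ∀ x y v, l (mulA x y) v - l x (l y v) = l (mulA y x) v - l y (l x v))
    (hrr : ∀ v x y, r (r v x) y - r v (mulA x y) = r (l x v) y - l x (r v y))
    (S : Finset (A × A))
    (hsymS : ∑ p ∈ S, p.2 ⊗ₜ[k] p.1 = ∑ p ∈ S, p.1 ⊗ₜ[k] p.2)
    (hseqS : ∑ p ∈ S, ∑ q ∈ S, ((p.1 ⊗ₜ[k] mulA p.2 q.1) ⊗ₜ[k] q.2
        - (mulA p.1 q.1 ⊗ₜ[k] p.2) ⊗ₜ[k] q.2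
        + (p.1 ⊗ₜ[k] q.1) ⊗ₜ[k] (mulA p.2 q.2 - mulA q.2 p.2)) = 0)
    (Dr : A →ₗ[k] A ⊗[k] A)
    (hDr' : ∀ x, Dr x = ∑ p ∈ S, (mulA x p.1 ⊗ₜ[k] p.2 + p.1 ⊗ₜ[k] (mulA x p.2 - mulA p.2 x)))
    (φ : M →ₗ[k] A ⊗[k] M)
    (hφ' : ∀ m, φ m = ∑ p ∈ S, p.1 ⊗ₜ[k] (r m p.2 - l p.2 m))
    (ψ : M →ₗ[k] M ⊗[k] A)
    (hψ' : ∀ m, ψ m = ∑ p ∈ S, (r m p.1) ⊗ₜ[k] p.2) :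
    ∀ v, Dr.rTensor M (φ v) - tassoc (φ.lTensor A (φ v))
      = tswap (Dr.rTensor M (φ v) - tassoc (φ.lTensor A (φ v))) := by
    intro m
    rw [← sub_eq_zero]
    trans (∑ p ∈ S, ∑ q ∈ S,
      ((mulA p.1 q.1 ⊗ₜ[k] q.2) ⊗ₜ[k] (r m p.2)
          + (q.1 ⊗ₜ[k] mulA p.1 q.2) ⊗ₜ[k] (r m p.2)
          - (q.1 ⊗ₜ[k] mulA q.2 p.1) ⊗ₜ[k] (r m p.2)
          - (mulA p.1 q.1 ⊗ₜ[k] q.2) ⊗ₜ[k] (l p.2 m)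
          - (q.1 ⊗ₜ[k] mulA p.1 q.2) ⊗ₜ[k] (l p.2 m)
          + (q.1 ⊗ₜ[k] mulA q.2 p.1) ⊗ₜ[k] (l p.2 m)
          - (p.1 ⊗ₜ[k] q.1) ⊗ₜ[k] (r (r m p.2) q.2)
          + (p.1 ⊗ₜ[k] q.1) ⊗ₜ[k] (l q.2 (r m p.2))
          + (p.1 ⊗ₜ[k] q.1) ⊗ₜ[k] (r (l p.2 m) q.2)
          - (p.1 ⊗ₜ[k] q.1) ⊗ₜ[k] (l q.2 (l p.2 m))
          - (q.2 ⊗ₜ[k] mulA p.1 q.1) ⊗ₜ[k] (r m p.2)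
          - (mulA p.1 q.2 ⊗ₜ[k] q.1) ⊗ₜ[k] (r m p.2)
          + (mulA q.2 p.1 ⊗ₜ[k] q.1) ⊗ₜ[k] (r m p.2)
          + (q.2 ⊗ₜ[k] mulA p.1 q.1) ⊗ₜ[k] (l p.2 m)
          + (mulA p.1 q.2 ⊗ₜ[k] q.1) ⊗ₜ[k] (l p.2 m)
          - (mulA q.2 p.1 ⊗ₜ[k] q.1) ⊗ₜ[k] (l p.2 m)
          + (q.1 ⊗ₜ[k] p.1) ⊗ₜ[k] (r (r m p.2) q.2)
          - (q.1 ⊗ₜ[k] p.1) ⊗ₜ[k] (l q.2 (r m p.2))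
          - (q.1 ⊗ₜ[k] p.1) ⊗ₜ[k] (r (l p.2 m) q.2)
          + (q.1 ⊗ₜ[k] p.1) ⊗ₜ[k] (l q.2 (l p.2 m))))
    · simp only [hφ', hψ', hDr', map_sum, LinearMap.rTensor_tmul, LinearMap.lTensor_tmul,
        map_sub, map_add, tflip_tmul, tassoc_tmul, tswap_tmul, LinearMap.sub_apply,
        LinearMap.add_apply, LinearMap.flip_apply, TensorProduct.tmul_sub,
        TensorProduct.sub_tmul, TensorProduct.tmul_add, TensorProduct.add_tmul,
        TensorProduct.tmul_sum, TensorProduct.sum_tmul,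
        Finset.sum_sub_distrib, Finset.sum_add_distrib]
      abel
    trans (∑ p ∈ S, ∑ q ∈ S,
      (((p.1 ⊗ₜ[k] q.1) ⊗ₜ[k] (l p.2 (r m q.2))
          + (p.1 ⊗ₜ[k] q.1) ⊗ₜ[k] (l q.2 (r m p.2))
          - (p.1 ⊗ₜ[k] q.1) ⊗ₜ[k] (l p.2 (l q.2 m))
          - (p.1 ⊗ₜ[k] q.1) ⊗ₜ[k] (r m (mulA q.2 p.2))
          + (p.1 ⊗ₜ[k] mulA p.2 q.1) ⊗ₜ[k] (r m q.2)
          - (p.1 ⊗ₜ[k] mulA p.2 q.1) ⊗ₜ[k] (l q.2 m)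
          - (mulA p.1 q.1 ⊗ₜ[k] p.2) ⊗ₜ[k] (r m q.2)
          + (mulA p.1 q.1 ⊗ₜ[k] p.2) ⊗ₜ[k] (l q.2 m))
        - ((q.1 ⊗ₜ[k] p.1) ⊗ₜ[k] (l q.2 (r m p.2))
          + (q.1 ⊗ₜ[k] p.1) ⊗ₜ[k] (l p.2 (r m q.2))
          - (q.1 ⊗ₜ[k] p.1) ⊗ₜ[k] (l q.2 (l p.2 m))
          - (q.1 ⊗ₜ[k] p.1) ⊗ₜ[k] (r m (mulA p.2 q.2))
          + (q.1 ⊗ₜ[k] mulA q.2 p.1) ⊗ₜ[k] (r m p.2)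
          - (q.1 ⊗ₜ[k] mulA q.2 p.1) ⊗ₜ[k] (l p.2 m)
          - (mulA q.1 p.1 ⊗ₜ[k] q.2) ⊗ₜ[k] (r m p.2)
          + (mulA q.1 p.1 ⊗ₜ[k] q.2) ⊗ₜ[k] (l p.2 m))
        + (((TensorProduct.mk k (A ⊗[k] A) M).flip (r m p.2 - l p.2 m) ∘ₗ (LinearMap.lTensor A (mulA p.1) - TensorProduct.map (mulA p.1 - mulA.flip p.1) (LinearMap.id (R := k) (M := A)) ∘ₗ tflip)) (q.1 ⊗ₜ[k] q.2)
          - ((TensorProduct.mk k (A ⊗[k] A) M).flip (r m p.2 - l p.2 m) ∘ₗ (LinearMap.lTensor A (mulA p.1) - TensorProduct.map (mulA p.1 - mulA.flip p.1) (LinearMap.id (R := k) (M := A)) ∘ₗ tflip)) (q.2 ⊗ₜ[k] q.1))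
        - ((LinearMap.lTensor (A ⊗[k] A) (r m - l.flip m)) ((p.1 ⊗ₜ[k] mulA p.2 q.1) ⊗ₜ[k] q.2)
          - (LinearMap.lTensor (A ⊗[k] A) (r m - l.flip m)) ((mulA p.1 q.1 ⊗ₜ[k] p.2) ⊗ₜ[k] q.2)
          + (LinearMap.lTensor (A ⊗[k] A) (r m - l.flip m)) ((p.1 ⊗ₜ[k] q.1) ⊗ₜ[k] (mulA p.2 q.2 - mulA q.2 p.2)))))
    · refine Finset.sum_congr rfl fun p _ => Finset.sum_congr rfl fun q _ => ?_
      simp only [LinearMap.sub_apply, LinearMap.add_apply, LinearMap.coe_comp,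
        Function.comp_apply, TensorProduct.mk_apply, LinearMap.flip_apply, tflip_tmul,
        TensorProduct.map_tmul, LinearMap.lTensor_tmul, LinearMap.rTensor_tmul,
        LinearMap.id_coe, id_eq,
        map_sub, map_add, TensorProduct.tmul_sub, TensorProduct.sub_tmul,
        TensorProduct.tmul_add, TensorProduct.add_tmul]
      rw [solve₁ (hrr m p.2 q.2), solve₁ (hl p.2 q.2 m)]
      simp only [TensorProduct.tmul_sub, TensorProduct.sub_tmul, TensorProduct.tmul_add,
        TensorProduct.add_tmul]
      abel
    · have hσ : (∑ p ∈ S, ∑ q ∈ S, ((TensorProduct.mk k (A ⊗[k] A) M).flip (r m p.2 - l p.2 m) ∘ₗ (LinearMap.lTensor A (mulA p.1) - TensorProduct.map (mulA p.1 - mulA.flip p.1) (LinearMap.id (R := k) (M := A)) ∘ₗ tflip)) (q.2 ⊗ₜ[k] q.1))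
          = ∑ p ∈ S, ∑ q ∈ S, ((TensorProduct.mk k (A ⊗[k] A) M).flip (r m p.2 - l p.2 m) ∘ₗ (LinearMap.lTensor A (mulA p.1) - TensorProduct.map (mulA p.1 - mulA.flip p.1) (LinearMap.id (R := k) (M := A)) ∘ₗ tflip)) (q.1 ⊗ₜ[k] q.2) :=
        Finset.sum_congr rfl fun p _ => sum_swap_of_symm hsymS _
      have z2 : (∑ p ∈ S, ∑ q ∈ S, (((TensorProduct.mk k (A ⊗[k] A) M).flip (r m p.2 - l p.2 m) ∘ₗ (LinearMap.lTensor A (mulA p.1) - TensorProduct.map (mulA p.1 - mulA.flip p.1) (LinearMap.id (R := k) (M := A)) ∘ₗ tflip)) (q.1 ⊗ₜ[k] q.2)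
          - ((TensorProduct.mk k (A ⊗[k] A) M).flip (r m p.2 - l p.2 m) ∘ₗ (LinearMap.lTensor A (mulA p.1) - TensorProduct.map (mulA p.1 - mulA.flip p.1) (LinearMap.id (R := k) (M := A)) ∘ₗ tflip)) (q.2 ⊗ₜ[k] q.1))) = 0 := by
        simp only [Finset.sum_sub_distrib]
        rw [hσ]
        exact sub_self _
      have z3 := seq_apply hseqS (LinearMap.lTensor (A ⊗[k] A) (r m - l.flip m))
      trans ((∑ p ∈ S, ∑ q ∈ S,
          ((p.1 ⊗ₜ[k] q.1) ⊗ₜ[k] (l p.2 (r m q.2))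
          + (p.1 ⊗ₜ[k] q.1) ⊗ₜ[k] (l q.2 (r m p.2))
          - (p.1 ⊗ₜ[k] q.1) ⊗ₜ[k] (l p.2 (l q.2 m))
          - (p.1 ⊗ₜ[k] q.1) ⊗ₜ[k] (r m (mulA q.2 p.2))
          + (p.1 ⊗ₜ[k] mulA p.2 q.1) ⊗ₜ[k] (r m q.2)
          - (p.1 ⊗ₜ[k] mulA p.2 q.1) ⊗ₜ[k] (l q.2 m)
          - (mulA p.1 q.1 ⊗ₜ[k] p.2) ⊗ₜ[k] (r m q.2)
          + (mulA p.1 q.1 ⊗ₜ[k] p.2) ⊗ₜ[k] (l q.2 m)))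
        - (∑ p ∈ S, ∑ q ∈ S,
          ((q.1 ⊗ₜ[k] p.1) ⊗ₜ[k] (l q.2 (r m p.2))
          + (q.1 ⊗ₜ[k] p.1) ⊗ₜ[k] (l p.2 (r m q.2))
          - (q.1 ⊗ₜ[k] p.1) ⊗ₜ[k] (l q.2 (l p.2 m))
          - (q.1 ⊗ₜ[k] p.1) ⊗ₜ[k] (r m (mulA p.2 q.2))
          + (q.1 ⊗ₜ[k] mulA q.2 p.1) ⊗ₜ[k] (r m p.2)
          - (q.1 ⊗ₜ[k] mulA q.2 p.1) ⊗ₜ[k] (l p.2 m)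
          - (mulA q.1 p.1 ⊗ₜ[k] q.2) ⊗ₜ[k] (r m p.2)
          + (mulA q.1 p.1 ⊗ₜ[k] q.2) ⊗ₜ[k] (l p.2 m)))
        + (∑ p ∈ S, ∑ q ∈ S, (((TensorProduct.mk k (A ⊗[k] A) M).flip (r m p.2 - l p.2 m) ∘ₗ (LinearMap.lTensor A (mulA p.1) - TensorProduct.map (mulA p.1 - mulA.flip p.1) (LinearMap.id (R := k) (M := A)) ∘ₗ tflip)) (q.1 ⊗ₜ[k] q.2)
          - ((TensorProduct.mk k (A ⊗[k] A) M).flip (r m p.2 - l p.2 m) ∘ₗ (LinearMap.lTensor A (mulA p.1) - TensorProduct.map (mulA p.1 - mulA.flip p.1) (LinearMap.id (R := k) (M := A)) ∘ₗ tflip)) (q.2 ⊗ₜ[k] q.1)))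
        - (∑ p ∈ S, ∑ q ∈ S,
          ((LinearMap.lTensor (A ⊗[k] A) (r m - l.flip m)) ((p.1 ⊗ₜ[k] mulA p.2 q.1) ⊗ₜ[k] q.2)
          - (LinearMap.lTensor (A ⊗[k] A) (r m - l.flip m)) ((mulA p.1 q.1 ⊗ₜ[k] p.2) ⊗ₜ[k] q.2)
          + (LinearMap.lTensor (A ⊗[k] A) (r m - l.flip m)) ((p.1 ⊗ₜ[k] q.1) ⊗ₜ[k] (mulA p.2 q.2 - mulA q.2 p.2)))))
      · simp only [Finset.sum_add_distrib, Finset.sum_sub_distrib]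
      · rw [show (∑ p ∈ S, ∑ q ∈ S,
            ((q.1 ⊗ₜ[k] p.1) ⊗ₜ[k] (l q.2 (r m p.2))
          + (q.1 ⊗ₜ[k] p.1) ⊗ₜ[k] (l p.2 (r m q.2))
          - (q.1 ⊗ₜ[k] p.1) ⊗ₜ[k] (l q.2 (l p.2 m))
          - (q.1 ⊗ₜ[k] p.1) ⊗ₜ[k] (r m (mulA p.2 q.2))
          + (q.1 ⊗ₜ[k] mulA q.2 p.1) ⊗ₜ[k] (r m p.2)
          - (q.1 ⊗ₜ[k] mulA q.2 p.1) ⊗ₜ[k] (l p.2 m)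
          - (mulA q.1 p.1 ⊗ₜ[k] q.2) ⊗ₜ[k] (r m p.2)
          + (mulA q.1 p.1 ⊗ₜ[k] q.2) ⊗ₜ[k] (l p.2 m)))
            = ∑ p ∈ S, ∑ q ∈ S,
            ((p.1 ⊗ₜ[k] q.1) ⊗ₜ[k] (l p.2 (r m q.2))
          + (p.1 ⊗ₜ[k] q.1) ⊗ₜ[k] (l q.2 (r m p.2))
          - (p.1 ⊗ₜ[k] q.1) ⊗ₜ[k] (l p.2 (l q.2 m))
          - (p.1 ⊗ₜ[k] q.1) ⊗ₜ[k] (r m (mulA q.2 p.2))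
          + (p.1 ⊗ₜ[k] mulA p.2 q.1) ⊗ₜ[k] (r m q.2)
          - (p.1 ⊗ₜ[k] mulA p.2 q.1) ⊗ₜ[k] (l q.2 m)
          - (mulA p.1 q.1 ⊗ₜ[k] p.2) ⊗ₜ[k] (r m q.2)
          + (mulA p.1 q.1 ⊗ₜ[k] p.2) ⊗ₜ[k] (l q.2 m)) from Finset.sum_comm]
        rw [z2, z3]
        simp

set_option maxHeartbeats 8000000 in
lemma bicom2_aux {A M : Type*} [AddCommGroup A] [Module k A] [AddCommGroup M] [Module k M]
    (mulA : A →ₗ[k] A →ₗ[k] A)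
    (l : A →ₗ[k] M →ₗ[k] M) (r : M →ₗ[k] A →ₗ[k] M)
    (hl : ∀ x y v, l (mulA x y) v - l x (l y v) = l (mulA y x) v - l y (l x v))
    (hrr : ∀ v x y, r (r v x) y - r v (mulA x y) = r (l x v) y - l x (r v y))
    (S : Finset (A × A))
    (hsymS : ∑ p ∈ S, p.2 ⊗ₜ[k] p.1 = ∑ p ∈ S, p.1 ⊗ₜ[k] p.2)
    (hseqS : ∑ p ∈ S, ∑ q ∈ S, ((p.1 ⊗ₜ[k] mulA p.2 q.1) ⊗ₜ[k] q.2
        - (mulA p.1 q.1 ⊗ₜ[k] p.2) ⊗ₜ[k] q.2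
        + (p.1 ⊗ₜ[k] q.1) ⊗ₜ[k] (mulA p.2 q.2 - mulA q.2 p.2)) = 0)
    (Dr : A →ₗ[k] A ⊗[k] A)
    (hDr' : ∀ x, Dr x = ∑ p ∈ S, (mulA x p.1 ⊗ₜ[k] p.2 + p.1 ⊗ₜ[k] (mulA x p.2 - mulA p.2 x)))
    (φ : M →ₗ[k] A ⊗[k] M)
    (hφ' : ∀ m, φ m = ∑ p ∈ S, p.1 ⊗ₜ[k] (r m p.2 - l p.2 m))
    (ψ : M →ₗ[k] M ⊗[k] A)
    (hψ' : ∀ m, ψ m = ∑ p ∈ S, (r m p.1) ⊗ₜ[k] p.2) :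
    ∀ v, ψ.rTensor A (ψ v) - tassoc (Dr.lTensor M (ψ v))
      = tswap (φ.rTensor A (ψ v) - tassoc (ψ.lTensor A (φ v))) := by
    intro m
    rw [← sub_eq_zero]
    trans (∑ p ∈ S, ∑ q ∈ S,
      ((r (r m p.1) q.1 ⊗ₜ[k] q.2) ⊗ₜ[k] p.2
          - (r m p.1 ⊗ₜ[k] mulA p.2 q.1) ⊗ₜ[k] q.2
          - (r m p.1 ⊗ₜ[k] q.1) ⊗ₜ[k] mulA p.2 q.2
          + (r m p.1 ⊗ₜ[k] q.1) ⊗ₜ[k] mulA q.2 p.2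
          - (r (r m p.1) q.2 ⊗ₜ[k] q.1) ⊗ₜ[k] p.2
          + (l q.2 (r m p.1) ⊗ₜ[k] q.1) ⊗ₜ[k] p.2
          + (r (r m p.2) q.1 ⊗ₜ[k] p.1) ⊗ₜ[k] q.2
          - (r (l p.2 m) q.1 ⊗ₜ[k] p.1) ⊗ₜ[k] q.2))
    · simp only [hφ', hψ', hDr', map_sum, LinearMap.rTensor_tmul, LinearMap.lTensor_tmul,
        map_sub, map_add, tflip_tmul, tassoc_tmul, tswap_tmul, LinearMap.sub_apply,
        LinearMap.add_apply, LinearMap.flip_apply, TensorProduct.tmul_sub,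
        TensorProduct.sub_tmul, TensorProduct.tmul_add, TensorProduct.add_tmul,
        TensorProduct.tmul_sum, TensorProduct.sum_tmul,
        Finset.sum_sub_distrib, Finset.sum_add_distrib]
      abel
    trans (∑ p ∈ S, ∑ q ∈ S,
      (((l q.2 (r m p.2) ⊗ₜ[k] q.1) ⊗ₜ[k] p.1
          + (r m (mulA p.2 q.1) ⊗ₜ[k] p.1) ⊗ₜ[k] q.2
          + (r m (mulA q.1 p.1) ⊗ₜ[k] q.2) ⊗ₜ[k] p.2)
        - ((l p.2 (r m q.2) ⊗ₜ[k] p.1) ⊗ₜ[k] q.1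
          + (r m (mulA q.2 p.1) ⊗ₜ[k] q.1) ⊗ₜ[k] p.2
          + (r m (mulA p.1 q.1) ⊗ₜ[k] p.2) ⊗ₜ[k] q.2)
        + ((l q.2 (r m p.1) ⊗ₜ[k] q.1) ⊗ₜ[k] p.2
          - (l q.2 (r m p.2) ⊗ₜ[k] q.1) ⊗ₜ[k] p.1)
        + (((TensorProduct.mk k (M ⊗[k] A) A).flip p.2 ∘ₗ TensorProduct.map (r (l p.1 m) - l p.1 ∘ₗ r m) (LinearMap.id (R := k) (M := A)) + TensorProduct.map ((TensorProduct.mk k M A).flip p.1 ∘ₗ (l p.2 ∘ₗ r m)) (LinearMap.id (R := k) (M := A)) ∘ₗ tflip - (TensorProduct.mk k (M ⊗[k] A) A).flip p.2 ∘ₗ TensorProduct.map (r m ∘ₗ (mulA p.1 - mulA.flip p.1)) (LinearMap.id (R := k) (M := A)) ∘ₗ tflip) (q.1 ⊗ₜ[k] q.2)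
          - ((TensorProduct.mk k (M ⊗[k] A) A).flip p.2 ∘ₗ TensorProduct.map (r (l p.1 m) - l p.1 ∘ₗ r m) (LinearMap.id (R := k) (M := A)) + TensorProduct.map ((TensorProduct.mk k M A).flip p.1 ∘ₗ (l p.2 ∘ₗ r m)) (LinearMap.id (R := k) (M := A)) ∘ₗ tflip - (TensorProduct.mk k (M ⊗[k] A) A).flip p.2 ∘ₗ TensorProduct.map (r m ∘ₗ (mulA p.1 - mulA.flip p.1)) (LinearMap.id (R := k) (M := A)) ∘ₗ tflip) (q.2 ⊗ₜ[k] q.1))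
        - ((LinearMap.rTensor A (LinearMap.rTensor A (r m))) ((p.1 ⊗ₜ[k] mulA p.2 q.1) ⊗ₜ[k] q.2)
          - (LinearMap.rTensor A (LinearMap.rTensor A (r m))) ((mulA p.1 q.1 ⊗ₜ[k] p.2) ⊗ₜ[k] q.2)
          + (LinearMap.rTensor A (LinearMap.rTensor A (r m))) ((p.1 ⊗ₜ[k] q.1) ⊗ₜ[k] (mulA p.2 q.2 - mulA q.2 p.2)))))
    · refine Finset.sum_congr rfl fun p _ => Finset.sum_congr rfl fun q _ => ?_
      simp only [LinearMap.sub_apply, LinearMap.add_apply, LinearMap.coe_comp,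
        Function.comp_apply, TensorProduct.mk_apply, LinearMap.flip_apply, tflip_tmul,
        TensorProduct.map_tmul, LinearMap.lTensor_tmul, LinearMap.rTensor_tmul,
        LinearMap.id_coe, id_eq,
        map_sub, map_add, TensorProduct.tmul_sub, TensorProduct.sub_tmul,
        TensorProduct.tmul_add, TensorProduct.add_tmul]
      rw [solve₁ (hrr m p.1 q.1), solve₁ (hrr m p.1 q.2), solve₁ (hrr m p.2 q.1)]
      simp only [TensorProduct.tmul_sub, TensorProduct.sub_tmul, TensorProduct.tmul_add,
        TensorProduct.add_tmul]
      abel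
    · have hσ : (∑ p ∈ S, ∑ q ∈ S, ((TensorProduct.mk k (M ⊗[k] A) A).flip p.2 ∘ₗ TensorProduct.map (r (l p.1 m) - l p.1 ∘ₗ r m) (LinearMap.id (R := k) (M := A)) + TensorProduct.map ((TensorProduct.mk k M A).flip p.1 ∘ₗ (l p.2 ∘ₗ r m)) (LinearMap.id (R := k) (M := A)) ∘ₗ tflip - (TensorProduct.mk k (M ⊗[k] A) A).flip p.2 ∘ₗ TensorProduct.map (r m ∘ₗ (mulA p.1 - mulA.flip p.1)) (LinearMap.id (R := k) (M := A)) ∘ₗ tflip) (q.2 ⊗ₜ[k] q.1))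
          = ∑ p ∈ S, ∑ q ∈ S, ((TensorProduct.mk k (M ⊗[k] A) A).flip p.2 ∘ₗ TensorProduct.map (r (l p.1 m) - l p.1 ∘ₗ r m) (LinearMap.id (R := k) (M := A)) + TensorProduct.map ((TensorProduct.mk k M A).flip p.1 ∘ₗ (l p.2 ∘ₗ r m)) (LinearMap.id (R := k) (M := A)) ∘ₗ tflip - (TensorProduct.mk k (M ⊗[k] A) A).flip p.2 ∘ₗ TensorProduct.map (r m ∘ₗ (mulA p.1 - mulA.flip p.1)) (LinearMap.id (R := k) (M := A)) ∘ₗ tflip) (q.1 ⊗ₜ[k] q.2) :=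
        Finset.sum_congr rfl fun p _ => sum_swap_of_symm hsymS _
      have hσp : (∑ p ∈ S, ∑ q ∈ S, (l q.2 (r m p.2) ⊗ₜ[k] q.1) ⊗ₜ[k] p.1)
          = ∑ p ∈ S, ∑ q ∈ S, (l q.2 (r m p.1) ⊗ₜ[k] q.1) ⊗ₜ[k] p.2 := by
        rw [Finset.sum_comm]
        rw [show (∑ p ∈ S, ∑ q ∈ S, (l q.2 (r m p.1) ⊗ₜ[k] q.1) ⊗ₜ[k] p.2)
            = ∑ q ∈ S, ∑ p ∈ S, (l q.2 (r m p.1) ⊗ₜ[k] q.1) ⊗ₜ[k] p.2 from Finset.sum_comm]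
        refine Finset.sum_congr rfl fun q _ => ?_
        have hsw := sum_swap_of_symm hsymS
          (TensorProduct.map ((TensorProduct.mk k M A).flip q.1 ∘ₗ (l q.2 ∘ₗ r m))
            (LinearMap.id (R := k) (M := A)))
        simpa only [TensorProduct.map_tmul, LinearMap.coe_comp, Function.comp_apply,
          LinearMap.flip_apply, TensorProduct.mk_apply, LinearMap.id_coe, id_eq] using hsw
      have z4 : (∑ p ∈ S, ∑ q ∈ S, ((l q.2 (r m p.1) ⊗ₜ[k] q.1) ⊗ₜ[k] p.2
          - (l q.2 (r m p.2) ⊗ₜ[k] q.1) ⊗ₜ[k] p.1)) = 0 := by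
        simp only [Finset.sum_sub_distrib]
        rw [hσp]
        exact sub_self _
      have z2 : (∑ p ∈ S, ∑ q ∈ S, (((TensorProduct.mk k (M ⊗[k] A) A).flip p.2 ∘ₗ TensorProduct.map (r (l p.1 m) - l p.1 ∘ₗ r m) (LinearMap.id (R := k) (M := A)) + TensorProduct.map ((TensorProduct.mk k M A).flip p.1 ∘ₗ (l p.2 ∘ₗ r m)) (LinearMap.id (R := k) (M := A)) ∘ₗ tflip - (TensorProduct.mk k (M ⊗[k] A) A).flip p.2 ∘ₗ TensorProduct.map (r m ∘ₗ (mulA p.1 - mulA.flip p.1)) (LinearMap.id (R := k) (M := A)) ∘ₗ tflip) (q.1 ⊗ₜ[k] q.2)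
          - ((TensorProduct.mk k (M ⊗[k] A) A).flip p.2 ∘ₗ TensorProduct.map (r (l p.1 m) - l p.1 ∘ₗ r m) (LinearMap.id (R := k) (M := A)) + TensorProduct.map ((TensorProduct.mk k M A).flip p.1 ∘ₗ (l p.2 ∘ₗ r m)) (LinearMap.id (R := k) (M := A)) ∘ₗ tflip - (TensorProduct.mk k (M ⊗[k] A) A).flip p.2 ∘ₗ TensorProduct.map (r m ∘ₗ (mulA p.1 - mulA.flip p.1)) (LinearMap.id (R := k) (M := A)) ∘ₗ tflip) (q.2 ⊗ₜ[k] q.1))) = 0 := by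
        simp only [Finset.sum_sub_distrib]
        rw [hσ]
        exact sub_self _
      have z3 := seq_apply hseqS (LinearMap.rTensor A (LinearMap.rTensor A (r m)))
      trans ((∑ p ∈ S, ∑ q ∈ S,
          ((l q.2 (r m p.2) ⊗ₜ[k] q.1) ⊗ₜ[k] p.1
          + (r m (mulA p.2 q.1) ⊗ₜ[k] p.1) ⊗ₜ[k] q.2
          + (r m (mulA q.1 p.1) ⊗ₜ[k] q.2) ⊗ₜ[k] p.2))
        - (∑ p ∈ S, ∑ q ∈ S,
          ((l p.2 (r m q.2) ⊗ₜ[k] p.1) ⊗ₜ[k] q.1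
          + (r m (mulA q.2 p.1) ⊗ₜ[k] q.1) ⊗ₜ[k] p.2
          + (r m (mulA p.1 q.1) ⊗ₜ[k] p.2) ⊗ₜ[k] q.2))
        + (∑ p ∈ S, ∑ q ∈ S, ((l q.2 (r m p.1) ⊗ₜ[k] q.1) ⊗ₜ[k] p.2
          - (l q.2 (r m p.2) ⊗ₜ[k] q.1) ⊗ₜ[k] p.1))
        + (∑ p ∈ S, ∑ q ∈ S, (((TensorProduct.mk k (M ⊗[k] A) A).flip p.2 ∘ₗ TensorProduct.map (r (l p.1 m) - l p.1 ∘ₗ r m) (LinearMap.id (R := k) (M := A)) + TensorProduct.map ((TensorProduct.mk k M A).flip p.1 ∘ₗ (l p.2 ∘ₗ r m)) (LinearMap.id (R := k) (M := A)) ∘ₗ tflip - (TensorProduct.mk k (M ⊗[k] A) A).flip p.2 ∘ₗ TensorProduct.map (r m ∘ₗ (mulA p.1 - mulA.flip p.1)) (LinearMap.id (R := k) (M := A)) ∘ₗ tflip) (q.1 ⊗ₜ[k] q.2)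
          - ((TensorProduct.mk k (M ⊗[k] A) A).flip p.2 ∘ₗ TensorProduct.map (r (l p.1 m) - l p.1 ∘ₗ r m) (LinearMap.id (R := k) (M := A)) + TensorProduct.map ((TensorProduct.mk k M A).flip p.1 ∘ₗ (l p.2 ∘ₗ r m)) (LinearMap.id (R := k) (M := A)) ∘ₗ tflip - (TensorProduct.mk k (M ⊗[k] A) A).flip p.2 ∘ₗ TensorProduct.map (r m ∘ₗ (mulA p.1 - mulA.flip p.1)) (LinearMap.id (R := k) (M := A)) ∘ₗ tflip) (q.2 ⊗ₜ[k] q.1)))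
        - (∑ p ∈ S, ∑ q ∈ S,
          ((LinearMap.rTensor A (LinearMap.rTensor A (r m))) ((p.1 ⊗ₜ[k] mulA p.2 q.1) ⊗ₜ[k] q.2)
          - (LinearMap.rTensor A (LinearMap.rTensor A (r m))) ((mulA p.1 q.1 ⊗ₜ[k] p.2) ⊗ₜ[k] q.2)
          + (LinearMap.rTensor A (LinearMap.rTensor A (r m))) ((p.1 ⊗ₜ[k] q.1) ⊗ₜ[k] (mulA p.2 q.2 - mulA q.2 p.2)))))
      · simp only [Finset.sum_add_distrib, Finset.sum_sub_distrib]
      · rw [show (∑ p ∈ S, ∑ q ∈ S,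
            ((l p.2 (r m q.2) ⊗ₜ[k] p.1) ⊗ₜ[k] q.1
          + (r m (mulA q.2 p.1) ⊗ₜ[k] q.1) ⊗ₜ[k] p.2
          + (r m (mulA p.1 q.1) ⊗ₜ[k] p.2) ⊗ₜ[k] q.2))
            = ∑ p ∈ S, ∑ q ∈ S,
            ((l q.2 (r m p.2) ⊗ₜ[k] q.1) ⊗ₜ[k] p.1
          + (r m (mulA p.2 q.1) ⊗ₜ[k] p.1) ⊗ₜ[k] q.2
          + (r m (mulA q.1 p.1) ⊗ₜ[k] q.2) ⊗ₜ[k] p.2) from Finset.sum_comm]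
        rw [z2, z3]
        rw [z4]
        simp

set_option maxHeartbeats 2000000 in
/-- if `(A, ·, Δ_r)` is a quasitriangular left-symmetric bialgebra
(`r = rr` symmetric, satisfying the S-equation) and `M` is an `A`-bimodule, then the
coactions `φ(m) = Σ uᵢ⊗(m◁vᵢ) - uᵢ⊗(vᵢ▷m)` and `ψ(m) = Σ (m◁uᵢ)⊗vᵢ` make `M`
a left-symmetric Hopf bimodule over `(A, ·, Δ_r)`. -/
theorem quasitriangular_bimodule_isHopfBimod
    {A M : Type*} [AddCommGroup A] [Module k A] [AddCommGroup M] [Module k M]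
    (mulA : A →ₗ[k] A →ₗ[k] A) (hA : isLSA mulA)
    (rr : A ⊗[k] A)
    -- `r` is symmetric
    (hsym : tflip rr = rr)
    -- auxiliary maps used to express the S-equation
    (F G K : A →ₗ[k] A ⊗[k] A)
    (hF : ∀ v, F v = (mulA v).rTensor A rr)        -- F v = Σⱼ (v·uⱼ)⊗vⱼ
    (hG : ∀ u, G u = (mulA.flip u).rTensor A rr)    -- G u = Σᵢ (uᵢ·u)⊗vᵢ
    (hK : ∀ v, K v = (mulA v - mulA.flip v).lTensor A rr)  -- K v = Σⱼ uⱼ⊗[v,vⱼ]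
    -- the S-equation [[r,r]] = r₁₂r₂₃ - r₁₂r₁₃ + [r₁₃,r₂₃] = 0
    (hSeq : tassoc (F.lTensor A rr) - G.rTensor A rr + tassoc (K.lTensor A rr) = 0)
    -- the coproduct Δ_r(a) = Σᵢ a·uᵢ⊗vᵢ + uᵢ⊗[a,vᵢ]
    (Dr : A →ₗ[k] A ⊗[k] A)
    (hDr : ∀ a, Dr a = (mulA a).rTensor A rr + (mulA a - mulA.flip a).lTensor A rr)
    -- the A-bimodule M
    (l : A →ₗ[k] M →ₗ[k] M) (r : M →ₗ[k] A →ₗ[k] M) (hbm : isBimod mulA l r)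
    -- the coactions
    (φ : M →ₗ[k] A ⊗[k] M)
    (hφ : ∀ m, φ m = (r m).lTensor A rr - (l.flip m).lTensor A rr)
    (ψ : M →ₗ[k] M ⊗[k] A)
    (hψ : ∀ m, ψ m = (r m).rTensor A rr) :
    isHopfBimod mulA Dr l r φ ψ := by
  obtain ⟨S, hS⟩ := TensorProduct.exists_finset rr
  have hl := hbm.1
  have hrr := hbm.2
  have hsymS : ∑ p ∈ S, p.2 ⊗ₜ[k] p.1 = ∑ p ∈ S, p.1 ⊗ₜ[k] p.2 := by
    have h := hsym
    rw [hS] at h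
    simpa only [map_sum, tflip_tmul] using h
  have hφ' : ∀ m, φ m = ∑ p ∈ S, p.1 ⊗ₜ[k] (r m p.2 - l p.2 m) := by
    intro m
    rw [hφ, hS]
    simp only [map_sum, LinearMap.lTensor_tmul, LinearMap.sub_apply, LinearMap.flip_apply,
      TensorProduct.tmul_sub, Finset.sum_sub_distrib]
  have hψ' : ∀ m, ψ m = ∑ p ∈ S, (r m p.1) ⊗ₜ[k] p.2 := by
    intro m
    rw [hψ, hS]
    simp only [map_sum, LinearMap.rTensor_tmul]
  have hDr' : ∀ x, Dr x = ∑ p ∈ S,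
      (mulA x p.1 ⊗ₜ[k] p.2 + p.1 ⊗ₜ[k] (mulA x p.2 - mulA p.2 x)) := by
    intro x
    rw [hDr, hS]
    simp only [map_sum, LinearMap.rTensor_tmul, LinearMap.lTensor_tmul, LinearMap.sub_apply,
      LinearMap.add_apply, LinearMap.flip_apply, TensorProduct.tmul_sub,
      Finset.sum_add_distrib, Finset.sum_sub_distrib]
  have hseqS : ∑ p ∈ S, ∑ q ∈ S,
      ((p.1 ⊗ₜ[k] mulA p.2 q.1) ⊗ₜ[k] q.2 - (mulA p.1 q.1 ⊗ₜ[k] p.2) ⊗ₜ[k] q.2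
        + (p.1 ⊗ₜ[k] q.1) ⊗ₜ[k] (mulA p.2 q.2 - mulA q.2 p.2)) = 0 := by
    have h := hSeq
    rw [hS] at h
    simp only [hF, hG, hK, hS, map_sum, LinearMap.lTensor_tmul, LinearMap.rTensor_tmul,
      LinearMap.sub_apply, LinearMap.flip_apply, map_sub, tassoc_tmul,
      TensorProduct.tmul_sub, TensorProduct.sub_tmul, TensorProduct.tmul_sum,
      TensorProduct.sum_tmul, Finset.sum_sub_distrib] at h
    simp only [Finset.sum_sub_distrib, Finset.sum_add_distrib, TensorProduct.tmul_sub,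
      TensorProduct.sub_tmul]
    rw [show (∑ p ∈ S, ∑ q ∈ S, (mulA p.1 q.1 ⊗ₜ[k] p.2) ⊗ₜ[k] q.2)
        = ∑ p ∈ S, ∑ q ∈ S, (mulA q.1 p.1 ⊗ₜ[k] q.2) ⊗ₜ[k] p.2 from Finset.sum_comm]
    rw [← h]
  refine ⟨hbm, ⟨?_, ?_⟩, ?_, ?_, ?_, ?_⟩
  · -- bicomodule, first condition
    exact bicom1_aux mulA l r hl hrr S hsymS hseqS Dr hDr' φ hφ' ψ hψ'
  · -- bicomodule, second condition
    exact bicom2_aux mulA l r hl hrr S hsymS hseqS Dr hDr' φ hφ' ψ hψ'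
  · -- HM1
    intro x m
    rw [← sub_eq_zero]
    trans (∑ p ∈ S,
      (p.1 ⊗ₜ[k] (r (r m x) p.2) - p.1 ⊗ₜ[k] (l p.2 (r m x))
        - p.1 ⊗ₜ[k] (r (l x m) p.2) + p.1 ⊗ₜ[k] (l p.2 (l x m))
        - p.1 ⊗ₜ[k] (r (r m p.2) x) + p.1 ⊗ₜ[k] (r (l p.2 m) x)
        - (mulA x p.1) ⊗ₜ[k] (r m p.2) - p.1 ⊗ₜ[k] (r m (mulA x p.2))
        + p.1 ⊗ₜ[k] (r m (mulA p.2 x))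
        + (mulA x p.1) ⊗ₜ[k] (l p.2 m) + p.1 ⊗ₜ[k] (l (mulA x p.2) m)
        - p.1 ⊗ₜ[k] (l (mulA p.2 x) m)
        + (mulA x p.1) ⊗ₜ[k] (r m p.2) - (mulA x p.1) ⊗ₜ[k] (l p.2 m)
        + p.1 ⊗ₜ[k] (l x (r m p.2)) - p.1 ⊗ₜ[k] (l x (l p.2 m))))
    · simp only [hφ', hψ', hDr', map_sum, LinearMap.rTensor_tmul, LinearMap.lTensor_tmul,
        map_sub, map_add, tflip_tmul, tassoc_tmul, tswap_tmul, LinearMap.sub_apply,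
        LinearMap.add_apply, LinearMap.flip_apply, TensorProduct.tmul_sub,
        TensorProduct.sub_tmul, TensorProduct.tmul_add, TensorProduct.add_tmul,
        Finset.sum_sub_distrib, Finset.sum_add_distrib]
      abel
    · refine Finset.sum_eq_zero fun p _ => ?_
      rw [solve₁ (hrr m x p.2), solve₂ (hrr m p.2 x), solve₂ (hl x p.2 m)]
      simp only [TensorProduct.tmul_sub, TensorProduct.sub_tmul, TensorProduct.tmul_add,
        TensorProduct.add_tmul]
      abel
  · -- HM2
    intro x m
    rw [← sub_eq_zero]
    trans (∑ p ∈ S,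
      ((r (l x m) p.1) ⊗ₜ[k] p.2 - (r (r m x) p.1) ⊗ₜ[k] p.2
        - (l x (r m p.1)) ⊗ₜ[k] p.2 - (r m p.1) ⊗ₜ[k] (mulA x p.2)
        + (r m p.1) ⊗ₜ[k] (mulA p.2 x) + (r m (mulA x p.1)) ⊗ₜ[k] p.2
        + (r m p.1) ⊗ₜ[k] (mulA x p.2) - (r m p.1) ⊗ₜ[k] (mulA p.2 x)))
    · simp only [hφ', hψ', hDr', map_sum, LinearMap.rTensor_tmul, LinearMap.lTensor_tmul,
        map_sub, map_add, tflip_tmul, tassoc_tmul, tswap_tmul, LinearMap.sub_apply,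
        LinearMap.add_apply, LinearMap.flip_apply, TensorProduct.tmul_sub,
        TensorProduct.sub_tmul, TensorProduct.tmul_add, TensorProduct.add_tmul,
        Finset.sum_sub_distrib, Finset.sum_add_distrib]
      abel
    · refine Finset.sum_eq_zero fun p _ => ?_
      rw [solve₁ (hrr m x p.1)]
      simp only [TensorProduct.tmul_sub, TensorProduct.sub_tmul, TensorProduct.tmul_add,
        TensorProduct.add_tmul]
      abel
  · -- HM3
    intro x m
    rw [← sub_eq_zero]
    trans (∑ p ∈ S,
      (p.1 ⊗ₜ[k] (r (l x m) p.2) - p.1 ⊗ₜ[k] (l p.2 (l x m)) - p.2 ⊗ₜ[k] (r (l x m) p.1)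
        - (mulA x p.1) ⊗ₜ[k] (l p.2 m) - p.1 ⊗ₜ[k] (l (mulA x p.2) m)
        + p.1 ⊗ₜ[k] (l (mulA p.2 x) m)
        - (mulA x p.1) ⊗ₜ[k] (r m p.2) + (mulA x p.1) ⊗ₜ[k] (l p.2 m)
        - p.1 ⊗ₜ[k] (l x (r m p.2)) + p.1 ⊗ₜ[k] (l x (l p.2 m))
        + p.2 ⊗ₜ[k] (l x (r m p.1)) + (mulA x p.2) ⊗ₜ[k] (r m p.1)))
    · simp only [hφ', hψ', hDr', map_sum, LinearMap.rTensor_tmul, LinearMap.lTensor_tmul,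
        map_sub, map_add, tflip_tmul, tassoc_tmul, tswap_tmul, LinearMap.sub_apply,
        LinearMap.add_apply, LinearMap.flip_apply, TensorProduct.tmul_sub,
        TensorProduct.sub_tmul, TensorProduct.tmul_add, TensorProduct.add_tmul,
        Finset.sum_sub_distrib, Finset.sum_add_distrib]
      abel
    trans (∑ p ∈ S,
      ((LinearMap.lTensor A (r (l x m)) - LinearMap.lTensor A ((l x) ∘ₗ (r m))
          - TensorProduct.map (mulA x) (r m)) (p.1 ⊗ₜ[k] p.2)
        - (LinearMap.lTensor A (r (l x m)) - LinearMap.lTensor A ((l x) ∘ₗ (r m))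
          - TensorProduct.map (mulA x) (r m)) (p.2 ⊗ₜ[k] p.1)))
    · refine Finset.sum_congr rfl fun p _ => ?_
      rw [solve₂ (hl x p.2 m)]
      simp only [LinearMap.sub_apply, LinearMap.lTensor_tmul, TensorProduct.map_tmul,
        LinearMap.coe_comp, Function.comp_apply, TensorProduct.tmul_sub,
        TensorProduct.sub_tmul, TensorProduct.tmul_add, TensorProduct.add_tmul]
      abel
    · rw [Finset.sum_sub_distrib, sum_swap_of_symm hsymS]
      exact sub_self _
  · -- HM4
    intro x m
    rw [← sub_eq_zero]
    trans (∑ p ∈ S,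
      (p.1 ⊗ₜ[k] (r (r m x) p.2) - p.1 ⊗ₜ[k] (l p.2 (r m x)) - p.2 ⊗ₜ[k] (r (r m x) p.1)
        - p.1 ⊗ₜ[k] (r (r m p.2) x) + p.1 ⊗ₜ[k] (r (l p.2 m) x)
        - (mulA x p.1) ⊗ₜ[k] (r m p.2) - p.1 ⊗ₜ[k] (r m (mulA x p.2))
        + p.1 ⊗ₜ[k] (r m (mulA p.2 x))
        + (mulA p.2 x) ⊗ₜ[k] (r m p.1)
        + p.2 ⊗ₜ[k] (r m (mulA x p.1)) + (mulA x p.2) ⊗ₜ[k] (r m p.1)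
        - (mulA p.2 x) ⊗ₜ[k] (r m p.1)))
    · simp only [hφ', hψ', hDr', map_sum, LinearMap.rTensor_tmul, LinearMap.lTensor_tmul,
        map_sub, map_add, tflip_tmul, tassoc_tmul, tswap_tmul, LinearMap.sub_apply,
        LinearMap.add_apply, LinearMap.flip_apply, TensorProduct.tmul_sub,
        TensorProduct.sub_tmul, TensorProduct.tmul_add, TensorProduct.add_tmul,
        Finset.sum_sub_distrib, Finset.sum_add_distrib]
      abel
    trans (∑ p ∈ S,
      ((LinearMap.lTensor A (r (r m x)) - LinearMap.lTensor A ((r m) ∘ₗ (mulA x))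
          - TensorProduct.map (mulA x) (r m)) (p.1 ⊗ₜ[k] p.2)
        - (LinearMap.lTensor A (r (r m x)) - LinearMap.lTensor A ((r m) ∘ₗ (mulA x))
          - TensorProduct.map (mulA x) (r m)) (p.2 ⊗ₜ[k] p.1)))
    · refine Finset.sum_congr rfl fun p _ => ?_
      rw [solve₂ (hrr m p.2 x)]
      simp only [LinearMap.sub_apply, LinearMap.lTensor_tmul, TensorProduct.map_tmul,
        LinearMap.coe_comp, Function.comp_apply, TensorProduct.tmul_sub,
        TensorProduct.sub_tmul, TensorProduct.tmul_add, TensorProduct.add_tmul]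
      abel
    · rw [Finset.sum_sub_distrib, sum_swap_of_symm hsymS]
      exact sub_self _
end
end

section
/- Let A be a left-symmetric algebra and E a vector space containing A as a subspace, with V a complement of A in E (E = A⊕V as vector spaces) and p: E→A the projection with kernel V. Suppose E carries a left-symmetric algebra structure such that V is a left-symmetric subalgebra of E and p is a homomorphism of left-symmetric algebras. Then there exist linear maps ▷: A⊗V→V, ◁: V⊗A→V, θ: A⊗A→V and a bilinear product · on V such that the type-(a1) unified product A#θV is a left-symmetric algebra and the map A#θV → E, (a,x) ↦ a + x, is an isomorphism of left-symmetric algebras. -/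
open TensorProduct LinearMap

noncomputable section

variable {k : Type*} [Field k] [CharZero k]

/-- if `E` is a left-symmetric algebra containing the left-symmetric
algebra `A` as a subspace, with complement `V` such that `V` is a left-symmetric
subalgebra of `E` and the canonical projection `p : E → A` is an algebra
homomorphism, then `E` is isomorphic to a type-(a1) unified product `A #_θ V`. -/
theorem extension_gives_unified_product_a1
    {E : Type*} [AddCommGroup E] [Module k E]
    (A V : Submodule k E) (hAV : IsCompl A V)
    (mulE : E →ₗ[k] E →ₗ[k] E) (hE : isLSA mulE)
    -- `V` is a left-symmetric subalgebra of `E`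
    (hV : ∀ x ∈ V, ∀ y ∈ V, mulE x y ∈ V)
    -- `A` is a left-symmetric algebra
    (mulA : ↥A →ₗ[k] ↥A →ₗ[k] ↥A) (hmulA : isLSA mulA)
    -- the canonical projection onto `A` with kernel `V`
    (p : E →ₗ[k] ↥A) (hp1 : ∀ a : ↥A, p ↑a = a) (hp2 : ∀ v ∈ V, p v = 0)
    -- `p` is a left-symmetric algebra homomorphism
    (hphom : ∀ u v : E, p (mulE u v) = mulA (p u) (p v)) :
    ∃ (l : ↥A →ₗ[k] ↥V →ₗ[k] ↥V) (r : ↥V →ₗ[k] ↥A →ₗ[k] ↥V)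
      (θ : ↥A →ₗ[k] ↥A →ₗ[k] ↥V) (mulV : ↥V →ₗ[k] ↥V →ₗ[k] ↥V)
      (mulU : (↥A × ↥V) →ₗ[k] (↥A × ↥V) →ₗ[k] (↥A × ↥V)),
      (∀ (a b : ↥A) (x y : ↥V),
         mulU (a, x) (b, y) = (mulA a b, mulV x y + r x b + l a y + θ a b)) ∧
      isLSA mulU ∧
      ∃ e : (↥A × ↥V) ≃ₗ[k] E,
        (∀ (a : ↥A) (x : ↥V), e (a, x) = ↑a + ↑x) ∧
        (∀ u v : ↥A × ↥V, e (mulU u v) = mulE (e u) (e v)) := by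
  have hq : ∀ z : E, z - ↑(p z) ∈ V := by
    intro z
    have hz : z ∈ A ⊔ V := by rw [hAV.sup_eq_top]; trivial
    rcases Submodule.mem_sup.mp hz with ⟨a, ha, v, hv, rfl⟩
    have hpz : p (a + v) = ⟨a, ha⟩ := by
      rw [map_add, hp2 v hv, add_zero]
      exact hp1 ⟨a, ha⟩
    rw [hpz]
    simpa using hv
  set qV : E →ₗ[k] ↥V :=
    LinearMap.codRestrict V (LinearMap.id - A.subtype.comp p) hq with hqVdef
  have qV_apply : ∀ z : E, (qV z : E) = z - ↑(p z) := fun z => rfl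
  set e : (↥A × ↥V) ≃ₗ[k] E := Submodule.prodEquivOfIsCompl A V hAV with hedef
  have he_apply : ∀ (a : ↥A) (x : ↥V), e (a, x) = ↑a + ↑x := by
    intro a x
    simp [hedef, Submodule.coe_prodEquivOfIsCompl']
  have he_symm : ∀ z : E, e.symm z = (p z, qV z) := by
    intro z
    apply e.injective
    rw [e.apply_symm_apply, he_apply]
    simp [qV_apply]
  set mulEV : E →ₗ[k] E →ₗ[k] ↥V := mulE.compr₂ qV with hEV
  set l : ↥A →ₗ[k] ↥V →ₗ[k] ↥V := mulEV.compl₁₂ A.subtype V.subtype with hl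
  set r : ↥V →ₗ[k] ↥A →ₗ[k] ↥V := mulEV.compl₁₂ V.subtype A.subtype with hr
  set θ : ↥A →ₗ[k] ↥A →ₗ[k] ↥V := mulEV.compl₁₂ A.subtype A.subtype with hθ
  set mulV : ↥V →ₗ[k] ↥V →ₗ[k] ↥V := mulEV.compl₁₂ V.subtype V.subtype with hmV
  set mulU : (↥A × ↥V) →ₗ[k] (↥A × ↥V) →ₗ[k] (↥A × ↥V) :=
    (mulE.compl₁₂ e.toLinearMap e.toLinearMap).compr₂ e.symm.toLinearMap with hmU
  have mulU_apply : ∀ u v : ↥A × ↥V, mulU u v = e.symm (mulE (e u) (e v)) :=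
    fun u v => rfl
  refine ⟨l, r, θ, mulV, mulU, ?_, ?_, e, he_apply, ?_⟩
  · intro a b x y
    rw [mulU_apply, he_apply, he_apply, he_symm]
    have h1 : mulE (↑a + ↑x) (↑b + ↑y)
        = mulE (↑a) ↑b + mulE (↑a) ↑y + mulE (↑x) ↑b + mulE (↑x) ↑y := by
      simp only [map_add, LinearMap.add_apply]
      abel
    rw [h1]
    have hpa : p ↑a = a := hp1 a
    have hpb : p ↑b = b := hp1 b
    have hpx : p ↑x = 0 := hp2 _ x.2
    have hpy : p ↑y = 0 := hp2 _ y.2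
    refine Prod.ext ?_ ?_
    · show p _ = mulA a b
      simp [hphom, hpa, hpb, hpx, hpy]
    · show qV _ = _
      have hlv : l a y = qV (mulE (↑a) ↑y) := rfl
      have hrv : r x b = qV (mulE (↑x) ↑b) := rfl
      have hθv : θ a b = qV (mulE (↑a) ↑b) := rfl
      have hmvv : mulV x y = qV (mulE (↑x) ↑y) := rfl
      rw [map_add, map_add, map_add, hlv, hrv, hθv, hmvv]
      abel
  · intro u v w
    have hkey := hE (e u) (e v) (e w)
    simp only [mulU_apply, e.apply_symm_apply, ← map_sub, hkey]
  · intro u v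
    rw [mulU_apply, e.apply_symm_apply]
end
end

section
/- Let (▷,◁,θ,·) and (▷',◁',θ',·') be two type-(a1) extending datums of the left-symmetric algebra A by the vector space V whose unified products A#θV and A#θ'V are left-symmetric algebras. Then there is a bijection between the set of left-symmetric algebra homomorphisms ϕ: A#θV → A#θ'V whose restriction to A is the identity and the set of pairs (r,s) of linear maps r: V→A, s: V→V satisfying, for all a,b∈A, x,y∈V: r(x◁a) = r(x)·a; r(a▷x) = a·r(x); r(θ(a,b)) = 0 (the paper writes this as ab = ab + rθ(a,b)); r(x·y) = r(x)·r(y); s(x◁a) = s(x)◁'a + θ'(r(x),a); s(a▷y) = a▷'s(y) + θ'(a,r(y)); θ'(a,b) = s(θ(a,b)); s(x·y) = s(x)·'s(y) + s(x)◁'r(y) + r(x)▷'s(y) + θ'(r(x),r(y)). The bijection sends (r,s) to ϕ(a,x) = (a + r(x), s(x)); moreover ϕ is an isomorphism if and only if s: V→V is a linear isomorphism. -/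
open TensorProduct LinearMap

noncomputable section

variable {k : Type*} [Field k] [CharZero k]

/-- bijection between left-symmetric algebra homomorphisms
`A #_θ V → A #_{θ'} V` restricting to the identity on `A` and pairs `(r, s)` of
linear maps satisfying the stated compatibility conditions; the bijection sends
`(r, s)` to `ϕ(a, x) = (a + r x, s x)`, and `ϕ` is an isomorphism iff `s` is. -/
theorem homs_of_unified_products_a1_bijection
    {A V : Type*} [AddCommGroup A] [Module k A] [AddCommGroup V] [Module k V]
    (mulA : A →ₗ[k] A →ₗ[k] A) (hA : isLSA mulA)
    -- first extending datum and its unified product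
    (l : A →ₗ[k] V →ₗ[k] V) (r : V →ₗ[k] A →ₗ[k] V)
    (θ : A →ₗ[k] A →ₗ[k] V) (mulV : V →ₗ[k] V →ₗ[k] V)
    (mulU : (A × V) →ₗ[k] (A × V) →ₗ[k] (A × V))
    (hmulU : ∀ (a b : A) (x y : V),
      mulU (a, x) (b, y) = (mulA a b, mulV x y + r x b + l a y + θ a b))
    (hU : isLSA mulU)
    -- second extending datum and its unified product
    (l' : A →ₗ[k] V →ₗ[k] V) (r' : V →ₗ[k] A →ₗ[k] V)
    (θ' : A →ₗ[k] A →ₗ[k] V) (mulV' : V →ₗ[k] V →ₗ[k] V)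
    (mulU' : (A × V) →ₗ[k] (A × V) →ₗ[k] (A × V))
    (hmulU' : ∀ (a b : A) (x y : V),
      mulU' (a, x) (b, y) = (mulA a b, mulV' x y + r' x b + l' a y + θ' a b))
    (hU' : isLSA mulU') :
    ∃ e : {rs : (V →ₗ[k] A) × (V →ₗ[k] V) //
            (∀ (x : V) (a : A), rs.1 (r x a) = mulA (rs.1 x) a) ∧
            (∀ (a : A) (x : V), rs.1 (l a x) = mulA a (rs.1 x)) ∧
            (∀ a b : A, rs.1 (θ a b) = 0) ∧
            (∀ x y : V, rs.1 (mulV x y) = mulA (rs.1 x) (rs.1 y)) ∧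
            (∀ (x : V) (a : A), rs.2 (r x a) = r' (rs.2 x) a + θ' (rs.1 x) a) ∧
            (∀ (a : A) (y : V), rs.2 (l a y) = l' a (rs.2 y) + θ' a (rs.1 y)) ∧
            (∀ a b : A, θ' a b = rs.2 (θ a b)) ∧
            (∀ x y : V, rs.2 (mulV x y)
              = mulV' (rs.2 x) (rs.2 y) + r' (rs.2 x) (rs.1 y)
                + l' (rs.1 x) (rs.2 y) + θ' (rs.1 x) (rs.1 y))} ≃
          {f : (A × V) →ₗ[k] (A × V) //
            (∀ u v : A × V, f (mulU u v) = mulU' (f u) (f v)) ∧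
            (∀ a : A, f (a, 0) = (a, 0))},
      (∀ rs, ∀ (a : A) (x : V),
        (e rs : (A × V) →ₗ[k] (A × V)) (a, x) = (a + rs.val.1 x, rs.val.2 x)) ∧
      (∀ rs, Function.Bijective (e rs : (A × V) →ₗ[k] (A × V))
          ↔ Function.Bijective rs.val.2) := by
  classical
  -- the forward construction: (r, s) ↦ φ(a,x) = (a + r x, s x)
  set Φ : (V →ₗ[k] A) × (V →ₗ[k] V) → ((A × V) →ₗ[k] (A × V)) :=
    fun rs => (LinearMap.fst k A V + rs.1 ∘ₗ LinearMap.snd k A V).prod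
      (rs.2 ∘ₗ LinearMap.snd k A V) with hΦ
  have hΦapp : ∀ rs (a : A) (x : V), Φ rs (a, x) = (a + rs.1 x, rs.2 x) := by
    intro rs a x; simp [hΦ]
  -- decomposition of any hom restricting to the identity on A
  have hfdec : ∀ (f : (A × V) →ₗ[k] (A × V)), (∀ a : A, f (a, 0) = (a, 0)) →
      ∀ (a : A) (x : V), f (a, x) = (a + (f (0, x)).1, (f (0, x)).2) := by
    intro f hf a x
    have h1 : ((a, x) : A × V) = (a, 0) + (0, x) := by simp
    rw [h1, map_add, hf]
    exact Prod.ext (by simp) (by simp)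
  -- the two components of the hom condition for such an f
  have main : ∀ (f : (A × V) →ₗ[k] (A × V)),
      (∀ u v : A × V, f (mulU u v) = mulU' (f u) (f v)) →
      (∀ a : A, f (a, 0) = (a, 0)) →
      ∀ (a b : A) (x y : V),
        (mulA a b + (f (0, mulV x y + r x b + l a y + θ a b)).1
          = mulA (a + (f (0, x)).1) (b + (f (0, y)).1)) ∧
        ((f (0, mulV x y + r x b + l a y + θ a b)).2
          = mulV' (f (0, x)).2 (f (0, y)).2 + r' (f (0, x)).2 (b + (f (0, y)).1)
            + l' (a + (f (0, x)).1) (f (0, y)).2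
            + θ' (a + (f (0, x)).1) (b + (f (0, y)).1)) := by
    intro f hom hid a b x y
    have h := hom (a, x) (b, y)
    rw [hmulU, hfdec f hid, hfdec f hid a x, hfdec f hid b y, hmulU'] at h
    exact ⟨congrArg Prod.fst h, congrArg Prod.snd h⟩
  have hbij : ∀ rs : (V →ₗ[k] A) × (V →ₗ[k] V),
      Function.Bijective (Φ rs) ↔ Function.Bijective rs.2 := by
    rintro ⟨r₀, s₀⟩
    constructor
    · rintro ⟨hinj, hsurj⟩
      constructor
      · intro x x' hxx'
        have h : Φ (r₀, s₀) (-r₀ x, x) = Φ (r₀, s₀) (-r₀ x', x') := by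
          rw [hΦapp, hΦapp, hxx']; simp
        simpa using congrArg Prod.snd (hinj h)
      · intro y
        obtain ⟨u, hu⟩ := hsurj (0, y)
        refine ⟨u.2, ?_⟩
        have h2 := congrArg Prod.snd hu
        rwa [show u = (u.1, u.2) from rfl, hΦapp] at h2
    · rintro ⟨hinj, hsurj⟩
      constructor
      · intro u v huv
        obtain ⟨a, x⟩ := u; obtain ⟨b, y⟩ := v
        rw [hΦapp, hΦapp] at huv
        have hxy : x = y := hinj (congrArg Prod.snd huv)
        have hab := congrArg Prod.fst huv
        simp only [hxy] at hab
        exact Prod.ext (add_right_cancel hab) hxy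
      · intro w
        obtain ⟨b, y⟩ := w
        obtain ⟨x, hx⟩ := hsurj y
        exact ⟨(b - r₀ x, x), by rw [hΦapp, hx]; simp⟩
  refine ⟨⟨fun rs => ⟨Φ rs.val, ?_, ?_⟩,
      fun f => ⟨(LinearMap.fst k A V ∘ₗ f.val ∘ₗ LinearMap.inr k A V,
        LinearMap.snd k A V ∘ₗ f.val ∘ₗ LinearMap.inr k A V),
        ?_, ?_, ?_, ?_, ?_, ?_, ?_, ?_⟩, ?_, ?_⟩, ?_, ?_⟩
  · -- Φ rs is a hom
    rename_i rs
    obtain ⟨⟨r₀, s₀⟩, h1, h2, h3, h4, h5, h6, h7, h8⟩ := rs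
    intro u v
    obtain ⟨a, x⟩ := u; obtain ⟨b, y⟩ := v
    rw [hmulU, hΦapp, hΦapp, hΦapp, hmulU']
    refine Prod.ext ?_ ?_
    · simp only [map_add, h1 x b, h2 a y, h3 a b, h4 x y, LinearMap.add_apply,
        LinearMap.map_add]
      abel
    · simp only [map_add, h5 x b, h6 a y, ← h7 a b, h8 x y, LinearMap.add_apply,
        LinearMap.map_add]
      abel
  · -- Φ rs restricts to identity
    intro a; rw [hΦapp]; simp
  -- the eight conditions for a hom f
  · rename_i f; obtain ⟨f, hom, hid⟩ := f
    intro x a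
    have h := (main f hom hid 0 a x 0).1
    simpa [show f (0, 0) = 0 from map_zero f] using h
  · rename_i f; obtain ⟨f, hom, hid⟩ := f
    intro a x
    have h := (main f hom hid a 0 0 x).1
    simpa [show f (0, 0) = 0 from map_zero f] using h
  · rename_i f; obtain ⟨f, hom, hid⟩ := f
    intro a b
    have h := (main f hom hid a b 0 0).1
    simpa [show f (0, 0) = 0 from map_zero f] using h
  · rename_i f; obtain ⟨f, hom, hid⟩ := f
    intro x y
    have h := (main f hom hid 0 0 x y).1
    simpa using h
  · rename_i f; obtain ⟨f, hom, hid⟩ := f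
    intro x a
    have h := (main f hom hid 0 a x 0).2
    simpa [show f (0, 0) = 0 from map_zero f] using h
  · rename_i f; obtain ⟨f, hom, hid⟩ := f
    intro a y
    have h := (main f hom hid a 0 0 y).2
    simpa [show f (0, 0) = 0 from map_zero f] using h
  · rename_i f; obtain ⟨f, hom, hid⟩ := f
    intro a b
    have h := (main f hom hid a b 0 0).2
    simpa [show f (0, 0) = 0 from map_zero f] using h.symm
  · rename_i f; obtain ⟨f, hom, hid⟩ := f
    intro x y
    have h := (main f hom hid 0 0 x y).2
    simpa using h
  · -- left inverse
    intro rs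
    refine Subtype.ext (Prod.ext ?_ ?_) <;>
    · apply LinearMap.ext; intro x
      simp [hΦapp]
  · -- right inverse
    intro f
    obtain ⟨f, hom, hid⟩ := f
    refine Subtype.ext (LinearMap.ext ?_)
    intro u; obtain ⟨a, x⟩ := u
    rw [hΦapp, hfdec f hid a x]
    rfl
  · -- formula for e
    intro rs a x
    exact hΦapp rs.val a x
  · -- bijectivity criterion
    intro rs
    exact hbij rs.val
end
end

section
/- Let (A,Δ_A) be a left-symmetric coalgebra and E a vector space containing A as a subspace, V a complement of A in E, and p: E→A the projection with kernel V. Suppose E carries a left-symmetric coalgebra structure Δ_E such that p is a homomorphism of left-symmetric coalgebras, i.e. (p⊗p)∘Δ_E = Δ_A∘p. Then there exist linear maps φ: A→V⊗A, ψ: A→A⊗V, ρ: V→A⊗V, γ: V→V⊗A, P: A→V⊗V, Δ_V: V→V⊗V such that the type-(c1) unified coproduct A^P#V is a left-symmetric coalgebra and the map A^P#V → E, (a,x) ↦ a + x, is an isomorphism of left-symmetric coalgebras. -/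
open TensorProduct LinearMap

noncomputable section

variable {k : Type*} [Field k] [CharZero k]

section Aux

variable {M N : Type*} [AddCommGroup M] [Module k M] [AddCommGroup N] [Module k N]

omit [CharZero k] in
lemma rTensor_map_eq (D : M →ₗ[k] M ⊗[k] M) (s : M ≃ₗ[k] N) (t : M ⊗[k] M) :
    (TensorProduct.map s.toLinearMap s.toLinearMap ∘ₗ D ∘ₗ s.symm.toLinearMap).rTensor N
      (TensorProduct.map s.toLinearMap s.toLinearMap t)
    = TensorProduct.map (TensorProduct.map s.toLinearMap s.toLinearMap) s.toLinearMap
        (D.rTensor M t) := by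
  induction t using TensorProduct.induction_on with
  | zero => simp
  | tmul x y => simp [rTensor_tmul]
  | add x y hx hy => simp [hx, hy]

omit [CharZero k] in
lemma lTensor_map_eq (D : M →ₗ[k] M ⊗[k] M) (s : M ≃ₗ[k] N) (t : M ⊗[k] M) :
    (TensorProduct.map s.toLinearMap s.toLinearMap ∘ₗ D ∘ₗ s.symm.toLinearMap).lTensor N
      (TensorProduct.map s.toLinearMap s.toLinearMap t)
    = TensorProduct.map s.toLinearMap (TensorProduct.map s.toLinearMap s.toLinearMap)
        (D.lTensor M t) := by
  induction t using TensorProduct.induction_on with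
  | zero => simp
  | tmul x y => simp [lTensor_tmul]
  | add x y hx hy => simp [hx, hy]

omit [CharZero k] in
lemma tswap_map_eq (s : M ≃ₗ[k] N) (w : (M ⊗[k] M) ⊗[k] M) :
    tswap (TensorProduct.map (TensorProduct.map s.toLinearMap s.toLinearMap) s.toLinearMap w)
    = TensorProduct.map (TensorProduct.map s.toLinearMap s.toLinearMap) s.toLinearMap
        (tswap w) := by
  induction w using TensorProduct.induction_on with
  | zero => simp
  | tmul ab z =>
    induction ab using TensorProduct.induction_on with
    | zero => simp
    | tmul x y => simp [tswap, tflip, rTensor_tmul]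
    | add x y hx hy => simp only [add_tmul, map_add, hx, hy]
  | add x y hx hy => simp [hx, hy]

omit [CharZero k] in
lemma isLSC_congr (s : M ≃ₗ[k] N) {D : M →ₗ[k] M ⊗[k] M} (h : isLSC D) :
    isLSC (TensorProduct.map s.toLinearMap s.toLinearMap ∘ₗ D ∘ₗ s.symm.toLinearMap) := by
  intro u
  set F := TensorProduct.map s.toLinearMap s.toLinearMap ∘ₗ D ∘ₗ s.symm.toLinearMap with hF
  set G := TensorProduct.map (TensorProduct.map s.toLinearMap s.toLinearMap) s.toLinearMap
    with hG
  set v := s.symm u with hv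
  have hFu : F u = TensorProduct.map s.toLinearMap s.toLinearMap (D v) := rfl
  have h1 : F.rTensor N (F u) = G (D.rTensor M (D v)) := by
    rw [hFu, rTensor_map_eq]
  have h2 : tassoc (F.lTensor N (F u)) = G (tassoc (D.lTensor M (D v))) := by
    rw [hFu, lTensor_map_eq]
    exact (TensorProduct.map_map_assoc_symm _ _ _ _).symm
  rw [h1, h2, ← map_sub, tswap_map_eq]
  exact congrArg G (h v)

omit [CharZero k] in
/-- Decomposition of a tensor over a product space into its four components. -/
lemma tensor_prod_decomp {A V : Type*} [AddCommGroup A] [Module k A]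
    [AddCommGroup V] [Module k V] (t : (A × V) ⊗[k] (A × V)) :
    t = TensorProduct.map (LinearMap.inl k A V) (LinearMap.inl k A V)
          (TensorProduct.map (LinearMap.fst k A V) (LinearMap.fst k A V) t)
      + TensorProduct.map (LinearMap.inr k A V) (LinearMap.inl k A V)
          (TensorProduct.map (LinearMap.snd k A V) (LinearMap.fst k A V) t)
      + TensorProduct.map (LinearMap.inl k A V) (LinearMap.inr k A V)
          (TensorProduct.map (LinearMap.fst k A V) (LinearMap.snd k A V) t)
      + TensorProduct.map (LinearMap.inr k A V) (LinearMap.inr k A V)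
          (TensorProduct.map (LinearMap.snd k A V) (LinearMap.snd k A V) t) := by
  have h1 : (LinearMap.inl k A V) ∘ₗ (LinearMap.fst k A V)
      + (LinearMap.inr k A V) ∘ₗ (LinearMap.snd k A V) = LinearMap.id := by
    apply LinearMap.ext; intro x
    simp [Prod.ext_iff]
  have := congrArg (fun f => TensorProduct.map f f t) h1
  simp only [TensorProduct.map_add_left, TensorProduct.map_add_right,
    TensorProduct.map_comp, LinearMap.add_apply, LinearMap.comp_apply,
    TensorProduct.map_id, LinearMap.id_apply] at this
  conv_lhs => rw [← this]
  abel

end Aux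

/-- if `E` is a left-symmetric coalgebra containing the left-symmetric
coalgebra `A` as a subspace with complement `V`, and the canonical projection
`p : E → A` is a coalgebra homomorphism, then `E` is isomorphic to a type-(c1)
unified coproduct `A^P # V`. -/
theorem coextension_gives_unified_coproduct_c1
    {E : Type*} [AddCommGroup E] [Module k E]
    (A V : Submodule k E) (hAV : IsCompl A V)
    (DE : E →ₗ[k] E ⊗[k] E) (hE : isLSC DE)
    -- `A` is a left-symmetric coalgebra
    (DA : ↥A →ₗ[k] ↥A ⊗[k] ↥A) (hDA : isLSC DA)
    -- the canonical projection onto `A` with kernel `V`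
    (p : E →ₗ[k] ↥A) (hp1 : ∀ a : ↥A, p ↑a = a) (hp2 : ∀ v ∈ V, p v = 0)
    -- `p` is a left-symmetric coalgebra homomorphism: `(p ⊗ p) ∘ Δ_E = Δ_A ∘ p`
    (hphom : ∀ u : E, TensorProduct.map p p (DE u) = DA (p u)) :
    ∃ (φ : ↥A →ₗ[k] ↥V ⊗[k] ↥A) (ψ : ↥A →ₗ[k] ↥A ⊗[k] ↥V)
      (ρ : ↥V →ₗ[k] ↥A ⊗[k] ↥V) (γ : ↥V →ₗ[k] ↥V ⊗[k] ↥A)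
      (P : ↥A →ₗ[k] ↥V ⊗[k] ↥V) (DV : ↥V →ₗ[k] ↥V ⊗[k] ↥V)
      (DU : (↥A × ↥V) →ₗ[k] (↥A × ↥V) ⊗[k] (↥A × ↥V)),
      (∀ (a : ↥A) (x : ↥V),
        DU (a, x)
          = TensorProduct.map (LinearMap.inl k ↥A ↥V) (LinearMap.inl k ↥A ↥V) (DA a)
            + TensorProduct.map (LinearMap.inr k ↥A ↥V) (LinearMap.inl k ↥A ↥V) (φ a)
            + TensorProduct.map (LinearMap.inl k ↥A ↥V) (LinearMap.inr k ↥A ↥V) (ψ a)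
            + TensorProduct.map (LinearMap.inr k ↥A ↥V) (LinearMap.inr k ↥A ↥V) (P a)
            + TensorProduct.map (LinearMap.inr k ↥A ↥V) (LinearMap.inr k ↥A ↥V) (DV x)
            + TensorProduct.map (LinearMap.inl k ↥A ↥V) (LinearMap.inr k ↥A ↥V) (ρ x)
            + TensorProduct.map (LinearMap.inr k ↥A ↥V) (LinearMap.inl k ↥A ↥V) (γ x)) ∧
      isLSC DU ∧
      ∃ e : (↥A × ↥V) ≃ₗ[k] E,
        (∀ (a : ↥A) (x : ↥V), e (a, x) = ↑a + ↑x) ∧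
        (∀ u : ↥A × ↥V,
          DE (e u) = TensorProduct.map (e : (↥A × ↥V) →ₗ[k] E)
            (e : (↥A × ↥V) →ₗ[k] E) (DU u)) := by
  classical
  set e : (↥A × ↥V) ≃ₗ[k] E := Submodule.prodEquivOfIsCompl A V hAV with he
  have he_apply : ∀ (a : ↥A) (x : ↥V), e (a, x) = ↑a + ↑x := fun a x => rfl
  set DU : (↥A × ↥V) →ₗ[k] (↥A × ↥V) ⊗[k] (↥A × ↥V) :=
    TensorProduct.map e.symm.toLinearMap e.symm.toLinearMap ∘ₗ DE ∘ₗ e.toLinearMap with hDU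
  have hLSC : isLSC DU := by
    have := isLSC_congr (e.symm) hE
    simpa using this
  -- the projection is the first coordinate through `e.symm`
  have hfst : ∀ u : E, (LinearMap.fst k ↥A ↥V) (e.symm u) = p u := by
    intro u
    conv_rhs => rw [← e.apply_symm_apply u]
    obtain ⟨a, x⟩ := e.symm u
    rw [he_apply]
    simp only [LinearMap.fst_apply, map_add, hp1 a, hp2 x x.2, add_zero]
  have hAA : ∀ w : ↥A × ↥V,
      TensorProduct.map (LinearMap.fst k ↥A ↥V) (LinearMap.fst k ↥A ↥V) (DU w)
        = DA (p (e w)) := by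
    intro w
    have : TensorProduct.map (LinearMap.fst k ↥A ↥V) (LinearMap.fst k ↥A ↥V)
        (TensorProduct.map e.symm.toLinearMap e.symm.toLinearMap (DE (e w)))
        = TensorProduct.map p p (DE (e w)) := by
      have hc : (LinearMap.fst k ↥A ↥V) ∘ₗ e.symm.toLinearMap = p := LinearMap.ext hfst
      rw [← LinearMap.comp_apply, ← TensorProduct.map_comp, hc]
    simpa [hDU] using this.trans (hphom (e w))
  refine ⟨TensorProduct.map (LinearMap.snd k ↥A ↥V) (LinearMap.fst k ↥A ↥V) ∘ₗ DU ∘ₗ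
            LinearMap.inl k ↥A ↥V,
          TensorProduct.map (LinearMap.fst k ↥A ↥V) (LinearMap.snd k ↥A ↥V) ∘ₗ DU ∘ₗ
            LinearMap.inl k ↥A ↥V,
          TensorProduct.map (LinearMap.fst k ↥A ↥V) (LinearMap.snd k ↥A ↥V) ∘ₗ DU ∘ₗ
            LinearMap.inr k ↥A ↥V,
          TensorProduct.map (LinearMap.snd k ↥A ↥V) (LinearMap.fst k ↥A ↥V) ∘ₗ DU ∘ₗ
            LinearMap.inr k ↥A ↥V,
          TensorProduct.map (LinearMap.snd k ↥A ↥V) (LinearMap.snd k ↥A ↥V) ∘ₗ DU ∘ₗ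
            LinearMap.inl k ↥A ↥V,
          TensorProduct.map (LinearMap.snd k ↥A ↥V) (LinearMap.snd k ↥A ↥V) ∘ₗ DU ∘ₗ
            LinearMap.inr k ↥A ↥V,
          DU, ?_, hLSC, e, he_apply, ?_⟩
  · intro a x
    have hsplit : DU (a, x) = DU ((LinearMap.inl k ↥A ↥V) a) + DU ((LinearMap.inr k ↥A ↥V) x) := by
      rw [← map_add]
      congr 1
      simp [Prod.ext_iff]
    have hAAa : TensorProduct.map (LinearMap.fst k ↥A ↥V) (LinearMap.fst k ↥A ↥V)
        (DU ((LinearMap.inl k ↥A ↥V) a)) = DA a := by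
      rw [hAA]
      congr 1
      have : e ((LinearMap.inl k ↥A ↥V) a) = (a : E) := by
        simpa using he_apply a 0
      rw [this, hp1]
    have hAAx : TensorProduct.map (LinearMap.fst k ↥A ↥V) (LinearMap.fst k ↥A ↥V)
        (DU ((LinearMap.inr k ↥A ↥V) x)) = 0 := by
      rw [hAA]
      have : e ((LinearMap.inr k ↥A ↥V) x) = (x : E) := by
        simpa using he_apply 0 x
      rw [this, hp2 x x.2, map_zero]
    rw [hsplit]
    nth_rewrite 1 [tensor_prod_decomp (DU ((LinearMap.inl k ↥A ↥V) a))]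
    nth_rewrite 1 [tensor_prod_decomp (DU ((LinearMap.inr k ↥A ↥V) x))]
    rw [hAAa, hAAx]
    simp only [LinearMap.comp_apply, map_zero]
    abel
  · intro u
    have : TensorProduct.map (e : (↥A × ↥V) →ₗ[k] E) (e : (↥A × ↥V) →ₗ[k] E) (DU u)
        = TensorProduct.map (e.toLinearMap ∘ₗ e.symm.toLinearMap)
            (e.toLinearMap ∘ₗ e.symm.toLinearMap) (DE (e u)) := by
      rw [TensorProduct.map_comp]
      rfl
    rw [this]
    have hid : e.toLinearMap ∘ₗ e.symm.toLinearMap = LinearMap.id := by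
      apply LinearMap.ext; intro x; simp
    rw [hid, TensorProduct.map_id, LinearMap.id_apply]
end
end

section
/- Let (φ,ψ,ρ,γ,P,Δ_V) and (φ',ψ',ρ',γ',P',Δ_V') be two type-(c1) extending datums of the left-symmetric coalgebra (A,Δ_A) by V whose unified coproducts A^P#V and A^P'#V are left-symmetric coalgebras. Then there is a bijection between the set of left-symmetric coalgebra homomorphisms ϕ: A^P#V → A^P'#V whose restriction to A is the identity and the set of pairs (r,s) of linear maps r: V→A, s: V→V satisfying, for all a∈A, x∈V (in Sweedler notation φ(a)=a(-1)⊗a(0), ψ(a)=a(0)⊗a(1), P(a)=a<1>⊗a<2>, ρ(x)=x[-1]⊗x[0], γ(x)=x[0]⊗x[1], Δ_V(x)=x1⊗x2): P'(a) = s(a<1>)⊗s(a<2>); φ'(a) = s(a(-1))⊗a(0) + s(a<1>)⊗r(a<2>); ψ'(a) = a(0)⊗s(a(1)) + r(a<1>)⊗s(a<2>); r(a(-1))⊗a(0) + a(0)⊗r(a(1)) + r(a<1>)⊗r(a<2>) = 0 (the paper writes this as Δ_A(a) = Δ_A(a) plus these terms); Δ_V'(s(x)) + P'(r(x)) = (s⊗s)Δ_V(x);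 ρ'(s(x)) + ψ'(r(x)) = r(x1)⊗s(x2) + x[-1]⊗s(x[0]); γ'(s(x)) + φ'(r(x)) = s(x1)⊗r(x2) + s(x[0])⊗x[1]; Δ_A(r(x)) = r(x1)⊗r(x2) + x[-1]⊗r(x[0]) + r(x[0])⊗x[1]. The bijection sends (r,s) to ϕ(a,x) = (a + r(x), s(x)); moreover ϕ is an isomorphism if and only if s: V→V is a linear isomorphism. -/
open TensorProduct LinearMap

noncomputable section

variable {k : Type*} [Field k] [CharZero k]

section MyAux

variable {M N P Q M' N' : Type*} [AddCommGroup M] [Module k M] [AddCommGroup N] [Module k N]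
  [AddCommGroup P] [Module k P] [AddCommGroup Q] [Module k Q]
  [AddCommGroup M'] [Module k M'] [AddCommGroup N'] [Module k N']

theorem my_map_map (f : P →ₗ[k] M') (g : Q →ₗ[k] N') (h : M →ₗ[k] P) (l : N →ₗ[k] Q)
    (t : M ⊗[k] N) :
    TensorProduct.map f g (TensorProduct.map h l t) = TensorProduct.map (f ∘ₗ h) (g ∘ₗ l) t := by
  rw [TensorProduct.map_comp]; rfl

theorem my_rT (f : M →ₗ[k] P) : f.rTensor N = TensorProduct.map f LinearMap.id := rfl
theorem my_lT (f : M →ₗ[k] P) : f.lTensor N = TensorProduct.map LinearMap.id f := rfl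

end MyAux

section MyAux2

variable {A V : Type*} [AddCommGroup A] [Module k A] [AddCommGroup V] [Module k V]

/-- The candidate homomorphism attached to a pair `(r, s)`. -/
def Fmap (r : V →ₗ[k] A) (s : V →ₗ[k] V) : (A × V) →ₗ[k] (A × V) :=
  ((fst k A V) + r ∘ₗ (snd k A V)).prod (s ∘ₗ snd k A V)

theorem Fmap_apply (r : V →ₗ[k] A) (s : V →ₗ[k] V) (a : A) (x : V) :
    Fmap r s (a, x) = (a + r x, s x) := by
  simp [Fmap]

theorem Fmap_comp_inl (r : V →ₗ[k] A) (s : V →ₗ[k] V) :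
    Fmap r s ∘ₗ inl k A V = inl k A V := by
  refine LinearMap.ext fun a => ?_
  simp only [comp_apply, inl_apply, Fmap_apply, map_zero, add_zero]

theorem Fmap_comp_inr (r : V →ₗ[k] A) (s : V →ₗ[k] V) :
    Fmap r s ∘ₗ inr k A V = inl k A V ∘ₗ r + inr k A V ∘ₗ s := by
  refine LinearMap.ext fun x => ?_
  simp only [comp_apply, inr_apply, Fmap_apply, LinearMap.add_apply, inl_apply, zero_add]
  exact Prod.ext (by simp) (by simp)

theorem my_expandRHS (DA : A →ₗ[k] A ⊗[k] A) (φ : A →ₗ[k] V ⊗[k] A) (ψ : A →ₗ[k] A ⊗[k] V)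
    (ρ : V →ₗ[k] A ⊗[k] V) (γ : V →ₗ[k] V ⊗[k] A) (P : A →ₗ[k] V ⊗[k] V) (DV : V →ₗ[k] V ⊗[k] V)
    (r : V →ₗ[k] A) (s : V →ₗ[k] V) (f : (A × V) →ₗ[k] (A × V))
    (hfl : f ∘ₗ inl k A V = inl k A V)
    (hfr : f ∘ₗ inr k A V = inl k A V ∘ₗ r + inr k A V ∘ₗ s) (a : A) (x : V) :
    TensorProduct.map f f
        (TensorProduct.map (LinearMap.inl k A V) (LinearMap.inl k A V) (DA a)
          + TensorProduct.map (LinearMap.inr k A V) (LinearMap.inl k A V) (φ a)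
          + TensorProduct.map (LinearMap.inl k A V) (LinearMap.inr k A V) (ψ a)
          + TensorProduct.map (LinearMap.inr k A V) (LinearMap.inr k A V) (P a)
          + TensorProduct.map (LinearMap.inr k A V) (LinearMap.inr k A V) (DV x)
          + TensorProduct.map (LinearMap.inl k A V) (LinearMap.inr k A V) (ρ x)
          + TensorProduct.map (LinearMap.inr k A V) (LinearMap.inl k A V) (γ x))
      = TensorProduct.map (LinearMap.inl k A V) (LinearMap.inl k A V)
          (DA a + (r.rTensor A (φ a) + r.lTensor A (ψ a) + TensorProduct.map r r (P a))
            + (TensorProduct.map r r (DV x) + r.lTensor A (ρ x) + r.rTensor A (γ x)))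
        + TensorProduct.map (LinearMap.inr k A V) (LinearMap.inl k A V)
          (s.rTensor A (φ a) + TensorProduct.map s r (P a)
            + (TensorProduct.map s r (DV x) + s.rTensor A (γ x)))
        + TensorProduct.map (LinearMap.inl k A V) (LinearMap.inr k A V)
          (s.lTensor A (ψ a) + TensorProduct.map r s (P a)
            + (TensorProduct.map r s (DV x) + s.lTensor A (ρ x)))
        + TensorProduct.map (LinearMap.inr k A V) (LinearMap.inr k A V)
          (TensorProduct.map s s (P a) + TensorProduct.map s s (DV x)) := by
  simp only [_root_.map_add, my_map_map, hfl, hfr, TensorProduct.map_add_left,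
    TensorProduct.map_add_right, LinearMap.add_apply, my_rT, my_lT, comp_id, id_comp]
  abel

theorem my_expandLHS (DA : A →ₗ[k] A ⊗[k] A) (φ' : A →ₗ[k] V ⊗[k] A) (ψ' : A →ₗ[k] A ⊗[k] V)
    (ρ' : V →ₗ[k] A ⊗[k] V) (γ' : V →ₗ[k] V ⊗[k] A) (P' : A →ₗ[k] V ⊗[k] V)
    (DV' : V →ₗ[k] V ⊗[k] V) (DU' : (A × V) →ₗ[k] (A × V) ⊗[k] (A × V))
    (hDU' : ∀ (a : A) (x : V),
      DU' (a, x)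
        = TensorProduct.map (LinearMap.inl k A V) (LinearMap.inl k A V) (DA a)
          + TensorProduct.map (LinearMap.inr k A V) (LinearMap.inl k A V) (φ' a)
          + TensorProduct.map (LinearMap.inl k A V) (LinearMap.inr k A V) (ψ' a)
          + TensorProduct.map (LinearMap.inr k A V) (LinearMap.inr k A V) (P' a)
          + TensorProduct.map (LinearMap.inr k A V) (LinearMap.inr k A V) (DV' x)
          + TensorProduct.map (LinearMap.inl k A V) (LinearMap.inr k A V) (ρ' x)
          + TensorProduct.map (LinearMap.inr k A V) (LinearMap.inl k A V) (γ' x))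
    (r : V →ₗ[k] A) (s : V →ₗ[k] V) (a : A) (x : V) :
    DU' (a + r x, s x)
      = TensorProduct.map (LinearMap.inl k A V) (LinearMap.inl k A V) (DA a + DA (r x))
        + TensorProduct.map (LinearMap.inr k A V) (LinearMap.inl k A V)
            (φ' a + (γ' (s x) + φ' (r x)))
        + TensorProduct.map (LinearMap.inl k A V) (LinearMap.inr k A V)
            (ψ' a + (ρ' (s x) + ψ' (r x)))
        + TensorProduct.map (LinearMap.inr k A V) (LinearMap.inr k A V)
            (P' a + (DV' (s x) + P' (r x))) := by
  rw [hDU' (a + r x) (s x)]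
  simp only [_root_.map_add]
  abel

theorem my_c1 {W : Type*} [AddCommGroup W] [Module k W] (g : W →ₗ[k] A) :
    fst k A V ∘ₗ (inl k A V ∘ₗ g) = g := by ext w; simp
theorem my_c2 {W : Type*} [AddCommGroup W] [Module k W] (g : W →ₗ[k] A) :
    snd k A V ∘ₗ (inl k A V ∘ₗ g) = 0 := by ext w; simp
theorem my_c3 {W : Type*} [AddCommGroup W] [Module k W] (g : W →ₗ[k] V) :
    fst k A V ∘ₗ (inr k A V ∘ₗ g) = 0 := by ext w; simp
theorem my_c4 {W : Type*} [AddCommGroup W] [Module k W] (g : W →ₗ[k] V) :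
    snd k A V ∘ₗ (inr k A V ∘ₗ g) = g := by ext w; simp

end MyAux2

set_option maxHeartbeats 1000000 in
/-- bijection between left-symmetric coalgebra homomorphisms
`A^P # V → A^{P'} # V` restricting to the identity on `A` and pairs `(r, s)`
satisfying the stated conditions; the bijection sends `(r, s)` to
`ϕ(a, x) = (a + r x, s x)`, and `ϕ` is an isomorphism iff `s` is. -/
theorem homs_of_unified_coproducts_c1_bijection
    {A V : Type*} [AddCommGroup A] [Module k A] [AddCommGroup V] [Module k V]
    (DA : A →ₗ[k] A ⊗[k] A) (hDA : isLSC DA)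
    -- first extending datum and its unified coproduct
    (φ : A →ₗ[k] V ⊗[k] A) (ψ : A →ₗ[k] A ⊗[k] V)
    (ρ : V →ₗ[k] A ⊗[k] V) (γ : V →ₗ[k] V ⊗[k] A)
    (P : A →ₗ[k] V ⊗[k] V) (DV : V →ₗ[k] V ⊗[k] V)
    (DU : (A × V) →ₗ[k] (A × V) ⊗[k] (A × V))
    (hDU : ∀ (a : A) (x : V),
      DU (a, x)
        = TensorProduct.map (LinearMap.inl k A V) (LinearMap.inl k A V) (DA a)
          + TensorProduct.map (LinearMap.inr k A V) (LinearMap.inl k A V) (φ a)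
          + TensorProduct.map (LinearMap.inl k A V) (LinearMap.inr k A V) (ψ a)
          + TensorProduct.map (LinearMap.inr k A V) (LinearMap.inr k A V) (P a)
          + TensorProduct.map (LinearMap.inr k A V) (LinearMap.inr k A V) (DV x)
          + TensorProduct.map (LinearMap.inl k A V) (LinearMap.inr k A V) (ρ x)
          + TensorProduct.map (LinearMap.inr k A V) (LinearMap.inl k A V) (γ x))
    (hU : isLSC DU)
    -- second extending datum and its unified coproduct
    (φ' : A →ₗ[k] V ⊗[k] A) (ψ' : A →ₗ[k] A ⊗[k] V)
    (ρ' : V →ₗ[k] A ⊗[k] V) (γ' : V →ₗ[k] V ⊗[k] A)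
    (P' : A →ₗ[k] V ⊗[k] V) (DV' : V →ₗ[k] V ⊗[k] V)
    (DU' : (A × V) →ₗ[k] (A × V) ⊗[k] (A × V))
    (hDU' : ∀ (a : A) (x : V),
      DU' (a, x)
        = TensorProduct.map (LinearMap.inl k A V) (LinearMap.inl k A V) (DA a)
          + TensorProduct.map (LinearMap.inr k A V) (LinearMap.inl k A V) (φ' a)
          + TensorProduct.map (LinearMap.inl k A V) (LinearMap.inr k A V) (ψ' a)
          + TensorProduct.map (LinearMap.inr k A V) (LinearMap.inr k A V) (P' a)
          + TensorProduct.map (LinearMap.inr k A V) (LinearMap.inr k A V) (DV' x)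
          + TensorProduct.map (LinearMap.inl k A V) (LinearMap.inr k A V) (ρ' x)
          + TensorProduct.map (LinearMap.inr k A V) (LinearMap.inl k A V) (γ' x))
    (hU' : isLSC DU') :
    ∃ e : {rs : (V →ₗ[k] A) × (V →ₗ[k] V) //
            (∀ a : A, P' a = TensorProduct.map rs.2 rs.2 (P a)) ∧
            (∀ a : A, φ' a = rs.2.rTensor A (φ a) + TensorProduct.map rs.2 rs.1 (P a)) ∧
            (∀ a : A, ψ' a = rs.2.lTensor A (ψ a) + TensorProduct.map rs.1 rs.2 (P a)) ∧
            (∀ a : A, rs.1.rTensor A (φ a) + rs.1.lTensor A (ψ a)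
                + TensorProduct.map rs.1 rs.1 (P a) = 0) ∧
            (∀ x : V, DV' (rs.2 x) + P' (rs.1 x) = TensorProduct.map rs.2 rs.2 (DV x)) ∧
            (∀ x : V, ρ' (rs.2 x) + ψ' (rs.1 x)
              = TensorProduct.map rs.1 rs.2 (DV x) + rs.2.lTensor A (ρ x)) ∧
            (∀ x : V, γ' (rs.2 x) + φ' (rs.1 x)
              = TensorProduct.map rs.2 rs.1 (DV x) + rs.2.rTensor A (γ x)) ∧
            (∀ x : V, DA (rs.1 x)
              = TensorProduct.map rs.1 rs.1 (DV x) + rs.1.lTensor A (ρ x)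
                + rs.1.rTensor A (γ x))} ≃
          {f : (A × V) →ₗ[k] (A × V) //
            (∀ u : A × V, DU' (f u) = TensorProduct.map f f (DU u)) ∧
            (∀ a : A, f (a, 0) = (a, 0))},
      (∀ rs, ∀ (a : A) (x : V),
        (e rs : (A × V) →ₗ[k] (A × V)) (a, x) = (a + rs.val.1 x, rs.val.2 x)) ∧
      (∀ rs, Function.Bijective (e rs : (A × V) →ₗ[k] (A × V))
          ↔ Function.Bijective rs.val.2) := by
  have hdecomp : ∀ (f : (A × V) →ₗ[k] (A × V)), (∀ a : A, f (a, 0) = (a, 0)) →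
      ∀ (a : A) (x : V), f (a, x) = (a + (f (0, x)).1, (f (0, x)).2) := by
    intro f hfa a x
    have h1 : ((a, x) : A × V) = (a, 0) + (0, x) := by simp
    rw [h1, map_add, hfa a]
    exact Prod.ext (by simp) (by simp)
  -- forward: conditions imply homomorphism property
  have main : ∀ (r : V →ₗ[k] A) (s : V →ₗ[k] V),
      (∀ a : A, P' a = TensorProduct.map s s (P a)) →
      (∀ a : A, φ' a = s.rTensor A (φ a) + TensorProduct.map s r (P a)) →
      (∀ a : A, ψ' a = s.lTensor A (ψ a) + TensorProduct.map r s (P a)) →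
      (∀ a : A, r.rTensor A (φ a) + r.lTensor A (ψ a) + TensorProduct.map r r (P a) = 0) →
      (∀ x : V, DV' (s x) + P' (r x) = TensorProduct.map s s (DV x)) →
      (∀ x : V, ρ' (s x) + ψ' (r x) = TensorProduct.map r s (DV x) + s.lTensor A (ρ x)) →
      (∀ x : V, γ' (s x) + φ' (r x) = TensorProduct.map s r (DV x) + s.rTensor A (γ x)) →
      (∀ x : V, DA (r x) = TensorProduct.map r r (DV x) + r.lTensor A (ρ x)
          + r.rTensor A (γ x)) →
      ∀ u : A × V, DU' (Fmap r s u) = TensorProduct.map (Fmap r s) (Fmap r s) (DU u) := by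
    intro r s h1 h2 h3 h4 h5 h6 h7 h8 u
    obtain ⟨a, x⟩ := u
    rw [Fmap_apply, my_expandLHS DA φ' ψ' ρ' γ' P' DV' DU' hDU' r s a x, hDU a x,
      my_expandRHS DA φ ψ ρ γ P DV r s (Fmap r s) (Fmap_comp_inl r s) (Fmap_comp_inr r s) a x,
      h1 a, h2 a, h3 a, h4 a, h5 x, h6 x, h7 x, h8 x]
    simp only [add_zero]
  -- backward: homomorphism property implies the conditions
  have conds : ∀ (f : (A × V) →ₗ[k] (A × V)),
      (∀ u : A × V, DU' (f u) = TensorProduct.map f f (DU u)) →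
      (∀ a : A, f (a, 0) = (a, 0)) →
      ∀ r s, r = fst k A V ∘ₗ f ∘ₗ inr k A V → s = snd k A V ∘ₗ f ∘ₗ inr k A V →
      (∀ a : A, P' a = TensorProduct.map s s (P a)) ∧
      (∀ a : A, φ' a = s.rTensor A (φ a) + TensorProduct.map s r (P a)) ∧
      (∀ a : A, ψ' a = s.lTensor A (ψ a) + TensorProduct.map r s (P a)) ∧
      (∀ a : A, r.rTensor A (φ a) + r.lTensor A (ψ a) + TensorProduct.map r r (P a) = 0) ∧
      (∀ x : V, DV' (s x) + P' (r x) = TensorProduct.map s s (DV x)) ∧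
      (∀ x : V, ρ' (s x) + ψ' (r x) = TensorProduct.map r s (DV x) + s.lTensor A (ρ x)) ∧
      (∀ x : V, γ' (s x) + φ' (r x) = TensorProduct.map s r (DV x) + s.rTensor A (γ x)) ∧
      (∀ x : V, DA (r x) = TensorProduct.map r r (DV x) + r.lTensor A (ρ x)
          + r.rTensor A (γ x)) := by
    intro f hf hfa r s hr hs
    have hfl : f ∘ₗ inl k A V = inl k A V := LinearMap.ext fun a => by
      simp only [comp_apply, inl_apply, hfa a]
    have hfr : f ∘ₗ inr k A V = inl k A V ∘ₗ r + inr k A V ∘ₗ s := by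
      subst hr hs
      refine LinearMap.ext fun x => ?_
      simp only [comp_apply, LinearMap.add_apply, inl_apply, inr_apply, fst_apply, snd_apply]
      exact Prod.ext (by simp) (by simp)
    have hfax : ∀ (a : A) (x : V), f (a, x) = (a + r x, s x) := by
      intro a x
      rw [hdecomp f hfa a x, hr, hs]
      exact Prod.ext (by simp) (by simp)
    have key : ∀ (a : A) (x : V),
        TensorProduct.map (LinearMap.inl k A V) (LinearMap.inl k A V) (DA a + DA (r x))
          + TensorProduct.map (LinearMap.inr k A V) (LinearMap.inl k A V)
              (φ' a + (γ' (s x) + φ' (r x)))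
          + TensorProduct.map (LinearMap.inl k A V) (LinearMap.inr k A V)
              (ψ' a + (ρ' (s x) + ψ' (r x)))
          + TensorProduct.map (LinearMap.inr k A V) (LinearMap.inr k A V)
              (P' a + (DV' (s x) + P' (r x)))
        = TensorProduct.map (LinearMap.inl k A V) (LinearMap.inl k A V)
            (DA a + (r.rTensor A (φ a) + r.lTensor A (ψ a) + TensorProduct.map r r (P a))
              + (TensorProduct.map r r (DV x) + r.lTensor A (ρ x) + r.rTensor A (γ x)))
          + TensorProduct.map (LinearMap.inr k A V) (LinearMap.inl k A V)
            (s.rTensor A (φ a) + TensorProduct.map s r (P a)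
              + (TensorProduct.map s r (DV x) + s.rTensor A (γ x)))
          + TensorProduct.map (LinearMap.inl k A V) (LinearMap.inr k A V)
            (s.lTensor A (ψ a) + TensorProduct.map r s (P a)
              + (TensorProduct.map r s (DV x) + s.lTensor A (ρ x)))
          + TensorProduct.map (LinearMap.inr k A V) (LinearMap.inr k A V)
            (TensorProduct.map s s (P a) + TensorProduct.map s s (DV x)) := by
      intro a x
      have h := hf (a, x)
      rw [hfax a x, hDU a x,
        my_expandRHS DA φ ψ ρ γ P DV r s f hfl hfr a x,
        my_expandLHS DA φ' ψ' ρ' γ' P' DV' DU' hDU' r s a x] at h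
      exact h
    refine ⟨?_, ?_, ?_, ?_, ?_, ?_, ?_, ?_⟩
    · intro a
      have h := congrArg (TensorProduct.map (snd k A V) (snd k A V)) (key a 0)
      simp only [_root_.map_add, my_map_map, fst_comp_inl, snd_comp_inl, fst_comp_inr,
        snd_comp_inr, my_c1, my_c2, my_c3, my_c4, TensorProduct.map_zero_left, TensorProduct.map_zero_right,
        TensorProduct.map_id, LinearMap.zero_apply, LinearMap.id_coe, id_eq, map_zero,
        zero_add, add_zero] at h
      linear_combination (norm := module) h
    · intro a
      have h := congrArg (TensorProduct.map (snd k A V) (fst k A V)) (key a 0)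
      simp only [_root_.map_add, my_map_map, fst_comp_inl, snd_comp_inl, fst_comp_inr,
        snd_comp_inr, my_c1, my_c2, my_c3, my_c4, TensorProduct.map_zero_left, TensorProduct.map_zero_right,
        TensorProduct.map_id, LinearMap.zero_apply, LinearMap.id_coe, id_eq, map_zero,
        zero_add, add_zero] at h
      linear_combination (norm := module) h
    · intro a
      have h := congrArg (TensorProduct.map (fst k A V) (snd k A V)) (key a 0)
      simp only [_root_.map_add, my_map_map, fst_comp_inl, snd_comp_inl, fst_comp_inr,
        snd_comp_inr, my_c1, my_c2, my_c3, my_c4, TensorProduct.map_zero_left, TensorProduct.map_zero_right,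
        TensorProduct.map_id, LinearMap.zero_apply, LinearMap.id_coe, id_eq, map_zero,
        zero_add, add_zero] at h
      linear_combination (norm := module) h
    · intro a
      have h := congrArg (TensorProduct.map (fst k A V) (fst k A V)) (key a 0)
      simp only [_root_.map_add, my_map_map, fst_comp_inl, snd_comp_inl, fst_comp_inr,
        snd_comp_inr, my_c1, my_c2, my_c3, my_c4, TensorProduct.map_zero_left, TensorProduct.map_zero_right,
        TensorProduct.map_id, LinearMap.zero_apply, LinearMap.id_coe, id_eq, map_zero,
        zero_add, add_zero] at h
      linear_combination (norm := module) -h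
    · intro x
      have h := congrArg (TensorProduct.map (snd k A V) (snd k A V)) (key 0 x)
      simp only [_root_.map_add, my_map_map, fst_comp_inl, snd_comp_inl, fst_comp_inr,
        snd_comp_inr, my_c1, my_c2, my_c3, my_c4, TensorProduct.map_zero_left, TensorProduct.map_zero_right,
        TensorProduct.map_id, LinearMap.zero_apply, LinearMap.id_coe, id_eq, map_zero,
        zero_add, add_zero] at h
      linear_combination (norm := module) h
    · intro x
      have h := congrArg (TensorProduct.map (fst k A V) (snd k A V)) (key 0 x)
      simp only [_root_.map_add, my_map_map, fst_comp_inl, snd_comp_inl, fst_comp_inr,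
        snd_comp_inr, my_c1, my_c2, my_c3, my_c4, TensorProduct.map_zero_left, TensorProduct.map_zero_right,
        TensorProduct.map_id, LinearMap.zero_apply, LinearMap.id_coe, id_eq, map_zero,
        zero_add, add_zero] at h
      linear_combination (norm := module) h
    · intro x
      have h := congrArg (TensorProduct.map (snd k A V) (fst k A V)) (key 0 x)
      simp only [_root_.map_add, my_map_map, fst_comp_inl, snd_comp_inl, fst_comp_inr,
        snd_comp_inr, my_c1, my_c2, my_c3, my_c4, TensorProduct.map_zero_left, TensorProduct.map_zero_right,
        TensorProduct.map_id, LinearMap.zero_apply, LinearMap.id_coe, id_eq, map_zero,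
        zero_add, add_zero] at h
      linear_combination (norm := module) h
    · intro x
      have h := congrArg (TensorProduct.map (fst k A V) (fst k A V)) (key 0 x)
      simp only [_root_.map_add, my_map_map, fst_comp_inl, snd_comp_inl, fst_comp_inr,
        snd_comp_inr, my_c1, my_c2, my_c3, my_c4, TensorProduct.map_zero_left, TensorProduct.map_zero_right,
        TensorProduct.map_id, LinearMap.zero_apply, LinearMap.id_coe, id_eq, map_zero,
        zero_add, add_zero] at h
      linear_combination (norm := module) h
  -- inverse-related small facts
  have linv1 : ∀ (r : V →ₗ[k] A) (s : V →ₗ[k] V),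
      fst k A V ∘ₗ Fmap r s ∘ₗ inr k A V = r :=
    fun r s => LinearMap.ext fun x => by
      simp only [comp_apply, inr_apply, Fmap_apply, fst_apply, zero_add]
  have linv2 : ∀ (r : V →ₗ[k] A) (s : V →ₗ[k] V),
      snd k A V ∘ₗ Fmap r s ∘ₗ inr k A V = s :=
    fun r s => LinearMap.ext fun x => by
      simp only [comp_apply, inr_apply, Fmap_apply, snd_apply]
  have rinv : ∀ (f : (A × V) →ₗ[k] (A × V)), (∀ a : A, f (a, 0) = (a, 0)) →
      Fmap (fst k A V ∘ₗ f ∘ₗ inr k A V) (snd k A V ∘ₗ f ∘ₗ inr k A V) = f := by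
    intro f hfa
    refine LinearMap.ext fun u => ?_
    obtain ⟨a, x⟩ := u
    rw [Fmap_apply, hdecomp f hfa a x]
    exact Prod.ext (by simp) (by simp)
  -- bijectivity criterion
  have bij : ∀ (r : V →ₗ[k] A) (s : V →ₗ[k] V),
      Function.Bijective (Fmap r s) ↔ Function.Bijective s := by
    intro r s
    constructor
    · rintro ⟨hinj, hsurj⟩
      constructor
      · intro x x' hxx
        have h1 : Fmap r s (-(r x), x) = (0, s x) := by rw [Fmap_apply]; simp
        have h2 : Fmap r s (-(r x'), x') = (0, s x') := by rw [Fmap_apply]; simp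
        have h3 : Fmap r s (-(r x), x) = Fmap r s (-(r x'), x') := by rw [h1, h2, hxx]
        exact congrArg Prod.snd (hinj h3)
      · intro y
        obtain ⟨⟨a, x⟩, hax⟩ := hsurj (0, y)
        rw [Fmap_apply] at hax
        exact ⟨x, congrArg Prod.snd hax⟩
    · rintro ⟨sinj, ssurj⟩
      constructor
      · rintro ⟨a, x⟩ ⟨a', x'⟩ h
        rw [Fmap_apply, Fmap_apply] at h
        have hx : x = x' := sinj (congrArg Prod.snd h)
        subst hx
        have ha : a = a' := add_right_cancel (congrArg Prod.fst h)
        rw [ha]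
      · rintro ⟨b, y⟩
        obtain ⟨x, hx⟩ := ssurj y
        exact ⟨(b - r x, x), by rw [Fmap_apply, hx]; simp⟩
  refine ⟨⟨fun rs => ⟨Fmap rs.1.1 rs.1.2,
      main rs.1.1 rs.1.2 rs.2.1 rs.2.2.1 rs.2.2.2.1 rs.2.2.2.2.1 rs.2.2.2.2.2.1
        rs.2.2.2.2.2.2.1 rs.2.2.2.2.2.2.2.1 rs.2.2.2.2.2.2.2.2,
      fun a => by rw [Fmap_apply]; simp⟩,
    fun f => ⟨(fst k A V ∘ₗ f.1 ∘ₗ inr k A V, snd k A V ∘ₗ f.1 ∘ₗ inr k A V),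
      conds f.1 f.2.1 f.2.2 _ _ rfl rfl⟩,
    fun rs => Subtype.ext (Prod.ext (linv1 _ _) (linv2 _ _)),
    fun f => Subtype.ext (rinv f.1 f.2.2)⟩, ?_, ?_⟩
  · intro rs a x
    exact Fmap_apply _ _ a x
  · intro rs
    exact bij _ _
end
end

section
/- Let (ρ,γ,Q,Δ_V) and (ρ',γ',Q',Δ_V') be two type-(c2) extending datums of the left-symmetric coalgebra (A,Δ_A) by V whose unified coproducts A#^QV and A#^Q'V are left-symmetric coalgebras. Then there is a bijection between the set of left-symmetric coalgebra homomorphisms ϕ: A#^QV → A#^Q'V whose restriction to A is the identity and the set of pairs (r,s) of linear maps r: V→A, s: V→V satisfying, for all x∈V (in Sweedler notation ρ(x)=x[-1]⊗x[0], γ(x)=x[0]⊗x[1], Q(x)=x{1}⊗x{2}, Δ_V(x)=x1⊗x2): ρ'(s(x)) = r(x1)⊗s(x2) + x[-1]⊗s(x[0]); γ'(s(x)) = s(x1)⊗r(x2) + s(x[0])⊗x[1]; Δ_V'(s(x)) = (s⊗s)Δ_V(x); Δ_A(r(x)) + Q'(s(x)) = r(x1)⊗r(x2) + x[-1]⊗r(x[0])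 + r(x[0])⊗x[1] + Q(x). The bijection sends (r,s) to ϕ(a,x) = (a + r(x), s(x)); moreover ϕ is an isomorphism if and only if s: V→V is a linear isomorphism. -/
open TensorProduct LinearMap

noncomputable section

variable {k : Type*} [Field k] [CharZero k]

section Aux

variable {A V : Type*} [AddCommGroup A] [Module k A] [AddCommGroup V] [Module k V]

/-- The candidate homomorphism `ϕ(a, x) = (a + r x, s x)`. -/
private def bmap (r : V →ₗ[k] A) (s : V →ₗ[k] V) : (A × V) →ₗ[k] (A × V) :=
  (LinearMap.fst k A V + r ∘ₗ LinearMap.snd k A V).prod (s ∘ₗ LinearMap.snd k A V)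

private lemma bmap_apply (r : V →ₗ[k] A) (s : V →ₗ[k] V) (a : A) (x : V) :
    bmap r s (a, x) = (a + r x, s x) := rfl

private lemma mapmap {M N P P' Q Q' : Type*} [AddCommGroup M] [Module k M]
    [AddCommGroup N] [Module k N] [AddCommGroup P] [Module k P] [AddCommGroup P'] [Module k P']
    [AddCommGroup Q] [Module k Q] [AddCommGroup Q'] [Module k Q']
    (f : P →ₗ[k] P') (g : Q →ₗ[k] Q') (h : M →ₗ[k] P) (l : N →ₗ[k] Q) (t : M ⊗[k] N) :
    TensorProduct.map f g (TensorProduct.map h l t)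
      = TensorProduct.map (f ∘ₗ h) (g ∘ₗ l) t := by
  rw [TensorProduct.map_comp]; rfl

private lemma lT_eq {M N P : Type*} [AddCommGroup M] [Module k M] [AddCommGroup N] [Module k N]
    [AddCommGroup P] [Module k P] (f : N →ₗ[k] P) :
    LinearMap.lTensor M f = TensorProduct.map LinearMap.id f := rfl

private lemma rT_eq {M N P : Type*} [AddCommGroup M] [Module k M] [AddCommGroup N] [Module k N]
    [AddCommGroup P] [Module k P] (f : N →ₗ[k] P) :
    LinearMap.rTensor M f = TensorProduct.map f LinearMap.id := rfl

private lemma bmap_bijective_iff (r : V →ₗ[k] A) (s : V →ₗ[k] V) :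
    Function.Bijective (bmap r s) ↔ Function.Bijective s := by
  constructor
  · rintro ⟨hinj, hsurj⟩
    constructor
    · intro x y hxy
      have h : bmap r s (-(r x), x) = bmap r s (-(r y), y) := by
        rw [bmap_apply, bmap_apply, hxy]
        simp
      have := hinj h
      exact congrArg Prod.snd this
    · intro y
      obtain ⟨⟨u1, u2⟩, hu⟩ := hsurj (0, y)
      rw [bmap_apply, Prod.mk.injEq] at hu
      exact ⟨u2, hu.2⟩
  · intro hs
    constructor
    · rintro ⟨u1, u2⟩ ⟨v1, v2⟩ huv
      rw [bmap_apply, bmap_apply, Prod.mk.injEq] at huv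
      obtain ⟨h1, h2⟩ := huv
      have hx : u2 = v2 := hs.1 h2
      rw [hx] at h1
      have : u1 = v1 := add_right_cancel h1
      rw [this, hx]
    · rintro ⟨b, y⟩
      obtain ⟨x, hx⟩ := hs.2 y
      refine ⟨(b - r x, x), ?_⟩
      rw [bmap_apply, hx]
      simp

end Aux

/-- bijection between left-symmetric coalgebra homomorphisms
`A #^Q V → A #^{Q'} V` restricting to the identity on `A` and pairs `(r, s)`
satisfying the stated conditions; the bijection sends `(r, s)` to
`ϕ(a, x) = (a + r x, s x)`, and `ϕ` is an isomorphism iff `s` is. -/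
theorem homs_of_unified_coproducts_c2_bijection
    {A V : Type*} [AddCommGroup A] [Module k A] [AddCommGroup V] [Module k V]
    (DA : A →ₗ[k] A ⊗[k] A) (hDA : isLSC DA)
    -- first extending datum and its unified coproduct
    (ρ : V →ₗ[k] A ⊗[k] V) (γ : V →ₗ[k] V ⊗[k] A)
    (Q : V →ₗ[k] A ⊗[k] A) (DV : V →ₗ[k] V ⊗[k] V)
    (DU : (A × V) →ₗ[k] (A × V) ⊗[k] (A × V))
    (hDU : ∀ (a : A) (x : V),
      DU (a, x)
        = TensorProduct.map (LinearMap.inl k A V) (LinearMap.inl k A V) (DA a)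
          + TensorProduct.map (LinearMap.inr k A V) (LinearMap.inr k A V) (DV x)
          + TensorProduct.map (LinearMap.inl k A V) (LinearMap.inr k A V) (ρ x)
          + TensorProduct.map (LinearMap.inr k A V) (LinearMap.inl k A V) (γ x)
          + TensorProduct.map (LinearMap.inl k A V) (LinearMap.inl k A V) (Q x))
    (hU : isLSC DU)
    -- second extending datum and its unified coproduct
    (ρ' : V →ₗ[k] A ⊗[k] V) (γ' : V →ₗ[k] V ⊗[k] A)
    (Q' : V →ₗ[k] A ⊗[k] A) (DV' : V →ₗ[k] V ⊗[k] V)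
    (DU' : (A × V) →ₗ[k] (A × V) ⊗[k] (A × V))
    (hDU' : ∀ (a : A) (x : V),
      DU' (a, x)
        = TensorProduct.map (LinearMap.inl k A V) (LinearMap.inl k A V) (DA a)
          + TensorProduct.map (LinearMap.inr k A V) (LinearMap.inr k A V) (DV' x)
          + TensorProduct.map (LinearMap.inl k A V) (LinearMap.inr k A V) (ρ' x)
          + TensorProduct.map (LinearMap.inr k A V) (LinearMap.inl k A V) (γ' x)
          + TensorProduct.map (LinearMap.inl k A V) (LinearMap.inl k A V) (Q' x))
    (hU' : isLSC DU') :
    ∃ e : {rs : (V →ₗ[k] A) × (V →ₗ[k] V) //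
            (∀ x : V, ρ' (rs.2 x)
              = TensorProduct.map rs.1 rs.2 (DV x) + rs.2.lTensor A (ρ x)) ∧
            (∀ x : V, γ' (rs.2 x)
              = TensorProduct.map rs.2 rs.1 (DV x) + rs.2.rTensor A (γ x)) ∧
            (∀ x : V, DV' (rs.2 x) = TensorProduct.map rs.2 rs.2 (DV x)) ∧
            (∀ x : V, DA (rs.1 x) + Q' (rs.2 x)
              = TensorProduct.map rs.1 rs.1 (DV x) + rs.1.lTensor A (ρ x)
                + rs.1.rTensor A (γ x) + Q x)} ≃
          {f : (A × V) →ₗ[k] (A × V) //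
            (∀ u : A × V, DU' (f u) = TensorProduct.map f f (DU u)) ∧
            (∀ a : A, f (a, 0) = (a, 0))},
      (∀ rs, ∀ (a : A) (x : V),
        (e rs : (A × V) →ₗ[k] (A × V)) (a, x) = (a + rs.val.1 x, rs.val.2 x)) ∧
      (∀ rs, Function.Bijective (e rs : (A × V) →ₗ[k] (A × V))
          ↔ Function.Bijective rs.val.2) := by
  -- `bmap r s` composed with the canonical injections
  have hfinl : ∀ (r : V →ₗ[k] A) (s : V →ₗ[k] V),
      bmap r s ∘ₗ inl k A V = inl k A V := by
    intro r s
    refine LinearMap.ext fun a => ?_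
    simp only [comp_apply, inl_apply, bmap_apply, map_zero, add_zero]
  have hfinr : ∀ (r : V →ₗ[k] A) (s : V →ₗ[k] V),
      bmap r s ∘ₗ inr k A V = inl k A V ∘ₗ r + inr k A V ∘ₗ s := by
    intro r s
    refine LinearMap.ext fun x => ?_
    simp only [comp_apply, inr_apply, bmap_apply, LinearMap.add_apply, inl_apply, zero_add,
      Prod.mk_add_mk, add_zero]
  -- expansion of `(f ⊗ f) (Δ_E x)` for a map restricting to the identity on `A`
  have expand : ∀ (f : (A × V) →ₗ[k] (A × V)) (r : V →ₗ[k] A) (s : V →ₗ[k] V),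
      f ∘ₗ inl k A V = inl k A V →
      f ∘ₗ inr k A V = inl k A V ∘ₗ r + inr k A V ∘ₗ s →
      ∀ x : V, TensorProduct.map f f (DU (0, x))
        = TensorProduct.map (inl k A V) (inl k A V)
            (TensorProduct.map r r (DV x) + LinearMap.lTensor A r (ρ x)
              + LinearMap.rTensor A r (γ x) + Q x)
          + TensorProduct.map (inl k A V) (inr k A V)
              (TensorProduct.map r s (DV x) + LinearMap.lTensor A s (ρ x))
          + TensorProduct.map (inr k A V) (inl k A V)
              (TensorProduct.map s r (DV x) + LinearMap.rTensor A s (γ x))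
          + TensorProduct.map (inr k A V) (inr k A V) (TensorProduct.map s s (DV x)) := by
    intro f r s h1 h2 x
    rw [hDU 0 x]
    simp only [map_zero, zero_add, map_add, mapmap, h1, h2, TensorProduct.map_add_left,
      TensorProduct.map_add_right, lT_eq, rT_eq, comp_id, id_comp, LinearMap.add_apply]
    abel
  -- (r, s) satisfying the conditions gives a homomorphism
  have key₁ : ∀ (r : V →ₗ[k] A) (s : V →ₗ[k] V),
      (∀ x : V, ρ' (s x) = TensorProduct.map r s (DV x) + LinearMap.lTensor A s (ρ x)) →
      (∀ x : V, γ' (s x) = TensorProduct.map s r (DV x) + LinearMap.rTensor A s (γ x)) →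
      (∀ x : V, DV' (s x) = TensorProduct.map s s (DV x)) →
      (∀ x : V, DA (r x) + Q' (s x)
        = TensorProduct.map r r (DV x) + LinearMap.lTensor A r (ρ x)
          + LinearMap.rTensor A r (γ x) + Q x) →
      ∀ u : A × V, DU' (bmap r s u) = TensorProduct.map (bmap r s) (bmap r s) (DU u) := by
    intro r s hc1 hc2 hc3 hc4 u
    have h1 := hfinl r s
    have h2 := hfinr r s
    have ha : ∀ a : A, DU' (bmap r s (a, 0))
        = TensorProduct.map (bmap r s) (bmap r s) (DU (a, 0)) := by
      intro a
      have e1 : bmap r s (a, 0) = (a, 0) := by rw [bmap_apply]; simp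
      rw [e1, hDU' a 0, hDU a 0]
      simp only [map_zero, add_zero, zero_add, map_add, mapmap, h1]
    have hx : ∀ x : V, DU' (bmap r s (0, x))
        = TensorProduct.map (bmap r s) (bmap r s) (DU (0, x)) := by
      intro x
      rw [expand (bmap r s) r s h1 h2 x]
      have e1 : bmap r s (0, x) = (r x, s x) := by rw [bmap_apply]; simp
      rw [e1, hDU' (r x) (s x), hc1 x, hc2 x, hc3 x]
      have hQ : TensorProduct.map (inl k A V) (inl k A V) (DA (r x))
          + TensorProduct.map (inl k A V) (inl k A V) (Q' (s x))
          = TensorProduct.map (inl k A V) (inl k A V)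
              (TensorProduct.map r r (DV x) + LinearMap.lTensor A r (ρ x)
                + LinearMap.rTensor A r (γ x) + Q x) := by
        rw [← map_add, hc4 x]
      rw [← hQ]
      abel
    have hu : u = ((u.1, 0) : A × V) + (0, u.2) := by simp
    rw [hu]
    simp only [map_add]
    rw [ha u.1, hx u.2]
  -- a homomorphism restricting to the identity gives (r, s) satisfying the conditions
  have key₂ : ∀ f : (A × V) →ₗ[k] (A × V),
      (∀ u : A × V, DU' (f u) = TensorProduct.map f f (DU u)) →
      (∀ a : A, f (a, 0) = (a, 0)) →
      ∀ x : V,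
        (ρ' ((snd k A V ∘ₗ f ∘ₗ inr k A V) x)
          = TensorProduct.map (fst k A V ∘ₗ f ∘ₗ inr k A V) (snd k A V ∘ₗ f ∘ₗ inr k A V) (DV x)
            + LinearMap.lTensor A (snd k A V ∘ₗ f ∘ₗ inr k A V) (ρ x)) ∧
        (γ' ((snd k A V ∘ₗ f ∘ₗ inr k A V) x)
          = TensorProduct.map (snd k A V ∘ₗ f ∘ₗ inr k A V) (fst k A V ∘ₗ f ∘ₗ inr k A V) (DV x)
            + LinearMap.rTensor A (snd k A V ∘ₗ f ∘ₗ inr k A V) (γ x)) ∧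
        (DV' ((snd k A V ∘ₗ f ∘ₗ inr k A V) x)
          = TensorProduct.map (snd k A V ∘ₗ f ∘ₗ inr k A V) (snd k A V ∘ₗ f ∘ₗ inr k A V) (DV x)) ∧
        (DA ((fst k A V ∘ₗ f ∘ₗ inr k A V) x) + Q' ((snd k A V ∘ₗ f ∘ₗ inr k A V) x)
          = TensorProduct.map (fst k A V ∘ₗ f ∘ₗ inr k A V) (fst k A V ∘ₗ f ∘ₗ inr k A V) (DV x)
            + LinearMap.lTensor A (fst k A V ∘ₗ f ∘ₗ inr k A V) (ρ x)
            + LinearMap.rTensor A (fst k A V ∘ₗ f ∘ₗ inr k A V) (γ x) + Q x) := by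
    intro f hom hid x
    set R : V →ₗ[k] A := fst k A V ∘ₗ f ∘ₗ inr k A V with hR
    set S : V →ₗ[k] V := snd k A V ∘ₗ f ∘ₗ inr k A V with hS
    have h1 : f ∘ₗ inl k A V = inl k A V := by
      refine LinearMap.ext fun a => ?_
      simp only [comp_apply, inl_apply]
      exact hid a
    have h2 : f ∘ₗ inr k A V = inl k A V ∘ₗ R + inr k A V ∘ₗ S := by
      refine LinearMap.ext fun y => ?_
      simp only [hR, hS, comp_apply, inr_apply, LinearMap.add_apply, inl_apply, fst_apply, snd_apply,
        Prod.mk_add_mk, add_zero, zero_add]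
    have hfx : f (0, x) = (R x, S x) := by
      simp only [hR, hS, comp_apply, inr_apply, fst_apply, snd_apply]
    have E := hom (0, x)
    rw [expand f R S h1 h2 x, hfx, hDU' (R x) (S x)] at E
    have E12 := congrArg (TensorProduct.map (fst k A V) (snd k A V)) E
    have E21 := congrArg (TensorProduct.map (snd k A V) (fst k A V)) E
    have E22 := congrArg (TensorProduct.map (snd k A V) (snd k A V)) E
    have E11 := congrArg (TensorProduct.map (fst k A V) (fst k A V)) E
    simp only [map_add, mapmap, ← LinearMap.comp_assoc, fst_comp_inl, fst_comp_inr,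
      snd_comp_inl, snd_comp_inr, zero_comp, id_comp,
      TensorProduct.map_zero_left, TensorProduct.map_zero_right, TensorProduct.map_id,
      LinearMap.zero_apply, LinearMap.id_coe, id_eq, zero_add, add_zero] at E12 E21 E22 E11
    exact ⟨E12, E21, E22, E11⟩
  refine ⟨{
    toFun := fun rs => ⟨bmap rs.1.1 rs.1.2,
      key₁ rs.1.1 rs.1.2 rs.2.1 rs.2.2.1 rs.2.2.2.1 rs.2.2.2.2,
      fun a => by rw [bmap_apply]; simp⟩
    invFun := fun fh => ⟨(fst k A V ∘ₗ fh.1 ∘ₗ inr k A V, snd k A V ∘ₗ fh.1 ∘ₗ inr k A V),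
      fun x => (key₂ fh.1 fh.2.1 fh.2.2 x).1,
      fun x => (key₂ fh.1 fh.2.1 fh.2.2 x).2.1,
      fun x => (key₂ fh.1 fh.2.1 fh.2.2 x).2.2.1,
      fun x => (key₂ fh.1 fh.2.1 fh.2.2 x).2.2.2⟩
    left_inv := ?_
    right_inv := ?_ }, ?_, ?_⟩
  · rintro ⟨⟨r, s⟩, h⟩
    apply Subtype.ext
    refine Prod.ext ?_ ?_ <;>
      · refine LinearMap.ext fun x => ?_
        simp [bmap_apply, comp_apply, inr_apply]
  · rintro ⟨f, hom, hid⟩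
    apply Subtype.ext
    refine LinearMap.ext fun u => ?_
    obtain ⟨a, x⟩ := u
    have hsplit : ((a, x) : A × V) = (a, 0) + (0, x) := by simp
    show bmap _ _ (a, x) = f (a, x)
    rw [bmap_apply, hsplit, map_add, hid a]
    simp [Prod.ext_iff, comp_apply]
  · intro rs a x
    rfl
  · intro rs
    exact bmap_bijective_iff rs.val.1 rs.val.2
end
end
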